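/- arXiv:1908.06145 — 5 statements merged into one kernel-verified Lean document; each statement's English description precedes it below -/
import Mathlib

section
/- Let f be a continuous map of a compact real interval into itself and let I₀, I₁, …, I_{k−1} be closed subintervals forming a loop, i.e., f(I_j) ⊇ I_{j+1} for 0 ≤ j ≤ k−2 and f(I_{k−1}) ⊇ I₀. Then there exists a point x with f^j(x) ∈ I_j for 0 ≤ j ≤ k−1 and f^k(x) = x. -/
open Set Function
open scoped Classical

namespace OverRotation

/-- Symbols for itineraries of unimodal maps, ordered `L < C < R` via `Symb.val`. -/
inductive Symb : Type
  | L : Symb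
  | C : Symb
  | R : Symb
  deriving DecidableEq

def Symb.val : Symb → ℕ
  | Symb.L => 0
  | Symb.C => 1
  | Symb.R => 2

/-- `GtA a x y` means `x >_a y`, i.e. `x < y < a` or `a < y < x`. -/
def GtA (a x y : ℝ) : Prop := (x < y ∧ y < a) ∨ (a < y ∧ y < x)

/-- `φ_a(y) = 1` if `y > a`, and `0` otherwise. -/
noncomputable def phiA (a y : ℝ) : ℝ := if a < y then 1 else 0

/-- The (forward) orbit of `x` under `f`. -/
def orbitSet (f : ℝ → ℝ) (x : ℝ) : Set ℝ := Set.range fun k : ℕ => f^[k] x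

/-- The number of indices `0 ≤ i < q` at which consecutive displacements along the
orbit of `x` have different signs; for a cycle of over-rotation pair `(p,q)` this is `2p`. -/
noncomputable def switchCount (f : ℝ → ℝ) (x : ℝ) (q : ℕ) : ℕ :=
  Set.ncard {i : ℕ | i < q ∧ (f^[i+1] x - f^[i] x) * (f^[i+2] x - f^[i+1] x) < 0}

/-- `x` generates a cycle of `f`, lying in `I`, of over-rotation pair `(p, q)`. -/
def IsCycleIn (f : ℝ → ℝ) (I : Set ℝ) (x : ℝ) (p q : ℕ) : Prop :=
  x ∈ I ∧ 2 ≤ q ∧ Function.minimalPeriod f x = q ∧ switchCount f x q = 2 * p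

/-- The set of over-rotation numbers of cycles of `f` lying in `I`. -/
def orNumsIn (f : ℝ → ℝ) (I : Set ℝ) : Set ℝ :=
  {ρ : ℝ | ∃ x p q, IsCycleIn f I x p q ∧ ρ = (p : ℝ) / (q : ℝ)}

/-- `L` is the code of the cycle `P` (with over-rotation number `ρ`, fixed point `a`):
`L` vanishes at the leftmost point of `P` and `L(f y) = L y + ρ - φ_a y` on `P`. -/
def IsCode (f : ℝ → ℝ) (a : ℝ) (P : Set ℝ) (ρ : ℝ) (L : ℝ → ℝ) : Prop :=
  (∃ x₀ ∈ P, (∀ y ∈ P, x₀ ≤ y) ∧ L x₀ = 0) ∧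
    ∀ y ∈ P, L (f y) = L y + ρ - phiA a y

/-- A pattern: a cyclic permutation of `{0, …, n-1}`, `n ≥ 2`. -/
def IsPattern {n : ℕ} (π : Equiv.Perm (Fin n)) : Prop :=
  2 ≤ n ∧ π.IsCycle ∧ ∀ i, π i ≠ i

/-- `f` exhibits the pattern `π` on the cycle `x 0 < x 1 < … < x (n-1)` inside `I`. -/
def ExhibitsOn (f : ℝ → ℝ) (I : Set ℝ) {n : ℕ} (π : Equiv.Perm (Fin n)) (x : Fin n → ℝ) : Prop :=
  (∀ i, x i ∈ I) ∧ StrictMono x ∧ ∀ i, f (x i) = x (π i)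

/-- `f` exhibits the pattern `π` on some cycle inside `I`. -/
def Exhibits (f : ℝ → ℝ) (I : Set ℝ) {n : ℕ} (π : Equiv.Perm (Fin n)) : Prop :=
  ∃ x : Fin n → ℝ, ExhibitsOn f I π x

/-- Pattern `π` forces pattern `θ`: every continuous self-map of a compact interval
having a cycle exhibiting `π` has a cycle exhibiting `θ`. -/
def Forces {m n : ℕ} (π : Equiv.Perm (Fin m)) (θ : Equiv.Perm (Fin n)) : Prop :=
  ∀ (f : ℝ → ℝ) (lo hi : ℝ), lo ≤ hi → ContinuousOn f (Set.Icc lo hi) →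
    Set.MapsTo f (Set.Icc lo hi) (Set.Icc lo hi) →
    Exhibits f (Set.Icc lo hi) π → Exhibits f (Set.Icc lo hi) θ

/-- Twice the `p` of the over-rotation pair of the pattern `π`: the number of (spatial)
positions at which the displacement direction changes at the next step. -/
noncomputable def permSwitchTwice {n : ℕ} (π : Equiv.Perm (Fin n)) : ℕ :=
  Set.ncard {i : Fin n | (i < π i ∧ π (π i) < π i) ∨ (π i < i ∧ π i < π (π i))}

/-- Over-rotation number of a pattern. -/
noncomputable def rotNum {n : ℕ} (π : Equiv.Perm (Fin n)) : ℝ :=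
  (permSwitchTwice π : ℝ) / (2 * (n : ℝ))

/-- An over-twist pattern: a pattern forcing no other pattern of the same
over-rotation number. -/
def IsOverTwist {n : ℕ} (π : Equiv.Perm (Fin n)) : Prop :=
  IsPattern π ∧ ∀ (m : ℕ) (θ : Equiv.Perm (Fin m)), IsPattern θ →
    rotNum θ = rotNum π → Forces π θ → ∃ h : m = n, h ▸ θ = π

/-- `f` is the `P`-linear map of the cycle `x 0 < … < x (n-1)` exhibiting `π`:
it agrees with the pattern on the cycle and is affine on each complementary interval
(and hence continuous on the convex hull of the cycle). -/
def IsPLinear {n : ℕ} (x : Fin n → ℝ) (π : Equiv.Perm (Fin n)) (f : ℝ → ℝ) : Prop :=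
  (∀ i, f (x i) = x (π i)) ∧
  (∀ i j : Fin n, (i : ℕ) + 1 = (j : ℕ) → ∀ t : ℝ, t ∈ Set.Icc (0:ℝ) 1 →
    f ((1 - t) * x i + t * x j) = (1 - t) * x (π i) + t * x (π j)) ∧
  (∀ i j : Fin n, ContinuousOn f (Set.Icc (x i) (x j)))

/-- A unimodal map of `[0,1]` with critical point `c`: continuous, strictly increasing
on `[0,c]`, strictly decreasing on `[c,1]`, with a unique fixed point. -/
def UnimodalMap (f : ℝ → ℝ) (c : ℝ) : Prop :=
  ContinuousOn f (Set.Icc 0 1) ∧ Set.MapsTo f (Set.Icc 0 1) (Set.Icc 0 1) ∧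
  c ∈ Set.Icc (0:ℝ) 1 ∧ StrictMonoOn f (Set.Icc 0 c) ∧ StrictAntiOn f (Set.Icc c 1) ∧
  ∃! a, a ∈ Set.Icc (0:ℝ) 1 ∧ f a = a

/-- A unimodal pattern: increasing up to some index, decreasing afterwards. -/
def UnimodalPattern {n : ℕ} (π : Equiv.Perm (Fin n)) : Prop :=
  ∃ m : Fin n, (∀ i j : Fin n, i < j → j ≤ m → π i < π j) ∧
    (∀ i j : Fin n, m ≤ i → i < j → π j < π i)

/-- The itinerary of `x` with respect to critical point `c`. -/
noncomputable def itin (f : ℝ → ℝ) (c x : ℝ) (j : ℕ) : Symb :=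
  if f^[j] x < c then Symb.L else if f^[j] x = c then Symb.C else Symb.R

/-- The kneading sequence of a unimodal map `f` with critical point `c`. -/
noncomputable def kneading (f : ℝ → ℝ) (c : ℝ) : ℕ → Symb := itin f c (f c)

/-- The number of `R`'s among `A 0, …, A (j-1)` is even. -/
def RParityEven (A : ℕ → Symb) (j : ℕ) : Prop :=
  Even (Set.ncard {i : ℕ | i < j ∧ A i = Symb.R})

/-- The strict kneading (parity-lexicographic) order `A ≻ B` on symbol sequences. -/
def KOgt (A B : ℕ → Symb) : Prop :=
  ∃ j : ℕ, (∀ i < j, A i = B i) ∧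
    ((RParityEven A j ∧ (B j).val < (A j).val) ∨ (¬ RParityEven A j ∧ (A j).val < (B j).val))

/-- `A ⪰ B` in the kneading order. -/
def KOge (A B : ℕ → Symb) : Prop := A = B ∨ KOgt A B

/-- The kneading sequence `ν_{p/q}` of the unimodal over-twist pattern of
over-rotation number `p/q`. -/
def nuRho (p q : ℕ) (n : ℕ) : Symb :=
  if ((n+1) * p) % q = 0 then Symb.C
  else if ((n+1) * p) % q < 2 * p then Symb.R
  else Symb.L

/-- The strongest kneading sequence `ν'_{p/q}` associated with the over-rotation
interval `[p/q, 1/2]`. -/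
def nuRho' (p q : ℕ) (n : ℕ) : Symb :=
  let k := if n < q + 2 then n else ((n - 2) % q) + 2
  if k = q - 1 then Symb.L
  else if k = q then Symb.R
  else if k = q + 1 then Symb.R
  else nuRho p q k

/-- The permutation `π_{p/q}` (0-based): `i ↦ i + p` for `i ≤ q-2p-1`,
`i ↦ 2q-2p-1-i` for `q-2p ≤ i ≤ q-p-1`, and `i ↦ q-1-i` for `i ≥ q-p`. -/
def twistFun (p q i : ℕ) : ℕ :=
  if i + 2 * p < q then i + p
  else if i + p < q then 2 * q - 2 * p - 1 - i
  else q - 1 - i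

/-- Strict Sharkovsky ordering `m ≻ₛ n` ("`m` is sharper than `n`"). -/
def SharkGt (m n : ℕ) : Prop :=
  if m / 2 ^ (m.factorization 2) = 1 then n / 2 ^ (n.factorization 2) = 1 ∧ n < m
  else n / 2 ^ (n.factorization 2) = 1 ∨ m.factorization 2 < n.factorization 2 ∨
    (m.factorization 2 = n.factorization 2 ∧
      m / 2 ^ (m.factorization 2) < n / 2 ^ (n.factorization 2))

/-- Non-strict Sharkovsky ordering, so that `Sh(k) = {n | 0 < n ∧ SharkGe k n}`. -/
def SharkGe (m n : ℕ) : Prop := m = n ∨ SharkGt m n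

/-- `f` is piecewise (strictly) monotone on `[lo, hi]`. -/
def PiecewiseMonotoneOn (f : ℝ → ℝ) (lo hi : ℝ) : Prop :=
  ∃ (k : ℕ) (t : ℕ → ℝ), 0 < k ∧ t 0 = lo ∧ t k = hi ∧ (∀ i < k, t i < t (i+1)) ∧
    ∀ i < k, StrictMonoOn f (Set.Icc (t i) (t (i+1))) ∨ StrictAntiOn f (Set.Icc (t i) (t (i+1)))

/-- The cycle `y 0 < … < y (N-1)` of `g` has a block structure over the pattern `θ`
on `m` blocks of `N/m` consecutive points each. -/
def HasBlockStructure (g : ℝ → ℝ) {N m : ℕ} (y : Fin N → ℝ) (θ : Equiv.Perm (Fin m)) : Prop :=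
  m ∣ N ∧ 1 < m ∧ m < N ∧
  ∀ i : Fin N, ∃ (j : Fin N) (b b' : Fin m),
    g (y i) = y j ∧ (b : ℕ) = (i : ℕ) / (N / m) ∧ (b' : ℕ) = (j : ℕ) / (N / m) ∧ θ b = b'

/-- `LF(p/q)`: the largest rational `l/k` with `l, k` positive, `k < q` and `l/k < p/q`. -/
noncomputable def LFrac (p q : ℕ) : ℝ :=
  sSup {r : ℝ | ∃ l k : ℕ, 0 < l ∧ 0 < k ∧ k < q ∧ (l:ℝ)/(k:ℝ) < (p:ℝ)/(q:ℝ) ∧ r = (l:ℝ)/(k:ℝ)}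

end OverRotation

namespace OverRotation

private lemma aux1 (f : ℝ → ℝ) (a b c d : ℝ) (hcd : c ≤ d)
    (hf : ContinuousOn f (Set.Icc a b)) (p q : ℝ) (hp : p ∈ Set.Icc a b) (hq : q ∈ Set.Icc a b)
    (hpq : p ≤ q) (hfp : f p = c) (hfq : f q = d) :
    ∃ a' b', a' ≤ b' ∧ Set.Icc a' b' ⊆ Set.Icc a b ∧ f '' Set.Icc a' b' = Set.Icc c d := by
  have hsub : Set.Icc p q ⊆ Set.Icc a b := Set.Icc_subset_Icc hp.1 hq.2
  have hfc : ContinuousOn f (Set.Icc p q) := hf.mono hsub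
  set S : Set ℝ := Set.Icc p q ∩ f ⁻¹' {c} with hS
  have hSclosed : IsClosed S := hfc.preimage_isClosed_of_isClosed isClosed_Icc isClosed_singleton
  have hScomp : IsCompact S := isCompact_Icc.of_isClosed_subset hSclosed Set.inter_subset_left
  have hSne : S.Nonempty := ⟨p, Set.left_mem_Icc.2 hpq, by simp [hfp]⟩
  obtain ⟨ha'S⟩ : ∃ _ : sSup S ∈ S, True := ⟨hScomp.sSup_mem hSne, trivial⟩
  set a' := sSup S with ha'
  have ha'pq : a' ∈ Set.Icc p q := ha'S.1
  have hfa' : f a' = c := ha'S.2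
  set T : Set ℝ := Set.Icc a' q ∩ f ⁻¹' {d} with hT
  have hT1 : Set.Icc a' q ⊆ Set.Icc p q := Set.Icc_subset_Icc ha'pq.1 le_rfl
  have hTclosed : IsClosed T :=
    (hfc.mono hT1).preimage_isClosed_of_isClosed isClosed_Icc isClosed_singleton
  have hTcomp : IsCompact T := isCompact_Icc.of_isClosed_subset hTclosed Set.inter_subset_left
  have hTne : T.Nonempty := ⟨q, Set.right_mem_Icc.2 ha'pq.2, by simp [hfq]⟩
  have hb'T : sInf T ∈ T := hTcomp.sInf_mem hTne
  set b' := sInf T with hb'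
  have hb'q : b' ∈ Set.Icc a' q := hb'T.1
  have hfb' : f b' = d := hb'T.2
  have hab' : a' ≤ b' := hb'q.1
  have hsub' : Set.Icc a' b' ⊆ Set.Icc a b :=
    (Set.Icc_subset_Icc ha'pq.1 (hb'q.2.trans le_rfl)).trans hsub
  refine ⟨a', b', hab', hsub', le_antisymm ?_ ?_⟩
  · rintro y ⟨x, hx, rfl⟩
    constructor
    · by_contra h
      push_neg at h
      have : (c:ℝ) ∈ Set.Icc (f x) (f b') := ⟨h.le, hfb' ▸ hcd⟩
      obtain ⟨y, hy, hyc⟩ := intermediate_value_Icc hx.2 (hf.mono ((Set.Icc_subset_Icc hx.1 le_rfl).trans hsub')) this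
      have hyS : y ∈ S := ⟨⟨ha'pq.1.trans (hx.1.trans hy.1), hy.2.trans hb'q.2⟩, hyc⟩
      have : y ≤ a' := le_csSup hScomp.bddAbove hyS
      have hxy : x = a' := le_antisymm (by linarith [hy.1]) hx.1
      rw [hxy, hfa'] at h; exact absurd h (lt_irrefl c)
    · by_contra h
      push_neg at h
      have : (d:ℝ) ∈ Set.Icc (f a') (f x) := ⟨hfa' ▸ hcd, h.le⟩
      obtain ⟨y, hy, hyd⟩ := intermediate_value_Icc hx.1 (hf.mono ((Set.Icc_subset_Icc le_rfl hx.2).trans hsub')) this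
      have hyT : y ∈ T := ⟨⟨hy.1, (hy.2.trans hx.2).trans hb'q.2⟩, hyd⟩
      have : b' ≤ y := csInf_le hTcomp.bddBelow hyT
      have hxy : x = b' := le_antisymm hx.2 (by linarith [hy.2])
      rw [hxy, hfb'] at h; exact absurd h (lt_irrefl d)
  · have := intermediate_value_Icc hab' (hf.mono hsub')
    rw [hfa', hfb'] at this
    exact this

/-- Covering lemma: if `[c,d] ⊆ f '' [a,b]` then some closed subinterval of `[a,b]`
maps exactly onto `[c,d]`. -/
private lemma aux2 (f : ℝ → ℝ) (a b c d : ℝ) (hcd : c ≤ d)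
    (hf : ContinuousOn f (Set.Icc a b)) (hcov : Set.Icc c d ⊆ f '' Set.Icc a b) :
    ∃ a' b', a' ≤ b' ∧ Set.Icc a' b' ⊆ Set.Icc a b ∧ f '' Set.Icc a' b' = Set.Icc c d := by
  obtain ⟨p, hp, hfp⟩ := hcov (Set.left_mem_Icc.2 hcd)
  obtain ⟨q, hq, hfq⟩ := hcov (Set.right_mem_Icc.2 hcd)
  rcases le_total p q with hpq | hpq
  · exact aux1 f a b c d hcd hf p q hp hq hpq hfp hfq
  · -- reflect
    have himg : (fun x : ℝ => -x) '' Set.Icc (-b) (-a) = Set.Icc a b := by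
      ext y
      constructor
      · rintro ⟨x, hx, rfl⟩; simp only; constructor <;> [linarith [hx.2]; linarith [hx.1]]
      · intro hy; exact ⟨-y, ⟨by linarith [hy.2], by linarith [hy.1]⟩, by simp⟩
    have hg : ContinuousOn (fun x => f (-x)) (Set.Icc (-b) (-a)) := by
      apply hf.comp continuousOn_neg
      intro x hx; rw [← himg]; exact Set.mem_image_of_mem _ hx
    have hpmem : -p ∈ Set.Icc (-b) (-a) := by simp [hp.1, hp.2]
    have hqmem : -q ∈ Set.Icc (-b) (-a) := by simp [hq.1, hq.2]
    obtain ⟨a'', b'', h1, h2, h3⟩ := aux1 (fun x => f (-x)) (-b) (-a) c d hcd hg (-p) (-q)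
      hpmem hqmem (by linarith) (by simp [hfp]) (by simp [hfq])
    refine ⟨-b'', -a'', by linarith, ?_, ?_⟩
    · intro x hx
      have : -x ∈ Set.Icc a'' b'' := by constructor <;> [linarith [hx.2]; linarith [hx.1]]
      have := h2 this
      constructor <;> [linarith [this.2]; linarith [this.1]]
    · rw [← h3]
      ext y
      constructor
      · rintro ⟨x, hx, rfl⟩
        exact ⟨-x, ⟨by linarith [hx.2], by linarith [hx.1]⟩, by simp⟩
      · rintro ⟨x, hx, rfl⟩
        exact ⟨-x, ⟨by linarith [hx.2], by linarith [hx.1]⟩, by simp⟩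

/-- If `I₀, …, I_{k-1}` is a loop of closed subintervals of a compact invariant interval
(`f(I_j) ⊇ I_{j+1 mod k}`), then there is a point `x` with `f^[j] x ∈ I_j` for all
`0 ≤ j ≤ k-1` and `f^[k] x = x`. -/
theorem loop_of_intervals_periodic_point (f : ℝ → ℝ) (lo hi : ℝ) (hle : lo ≤ hi)
    (hcont : ContinuousOn f (Set.Icc lo hi))
    (hmaps : Set.MapsTo f (Set.Icc lo hi) (Set.Icc lo hi))
    (k : ℕ) (hk : 0 < k) (u v : ℕ → ℝ)
    (huv : ∀ j < k, u j ≤ v j)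
    (hsub : ∀ j < k, Set.Icc (u j) (v j) ⊆ Set.Icc lo hi)
    (hloop : ∀ j < k, Set.Icc (u ((j + 1) % k)) (v ((j + 1) % k)) ⊆ f '' Set.Icc (u j) (v j)) :
    ∃ x : ℝ, (∀ j < k, f^[j] x ∈ Set.Icc (u j) (v j)) ∧ f^[k] x = x := by
  set I : ℕ → Set ℝ := fun j => Set.Icc (u (j % k)) (v (j % k)) with hI
  have hmod : ∀ j, j % k < k := fun j => Nat.mod_lt _ hk
  have hIle : ∀ j, u (j % k) ≤ v (j % k) := fun j => huv _ (hmod j)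
  have hIsub : ∀ j, I j ⊆ Set.Icc lo hi := fun j => hsub _ (hmod j)
  have hloop' : ∀ j < k, I (j + 1) ⊆ f '' I j := by
    intro j hj
    have h1 : j % k = j := Nat.mod_eq_of_lt hj
    have h2 : (j + 1) % k = (j + 1) % k := rfl
    have h3 : (j + 1) % k % k = (j + 1) % k := Nat.mod_mod_of_dvd _ dvd_rfl
    simp only [hI, h1, h3]
    exact hloop j hj
  -- chain of intervals
  have chain : ∀ m ≤ k, ∃ a b : ℝ, a ≤ b ∧ Set.Icc a b ⊆ I (k - m) ∧
      (∀ i ≤ m, f^[i] '' Set.Icc a b ⊆ I (k - m + i)) ∧ f^[m] '' Set.Icc a b = I 0 := by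
    intro m
    induction m with
    | zero =>
      intro _
      refine ⟨u 0, v 0, huv 0 hk, ?_, ?_, ?_⟩
      · simp only [hI, Nat.sub_zero, Nat.mod_self]
        exact fun x hx => hx
      · intro i hi
        interval_cases i
        simp only [hI, Nat.sub_zero, Nat.add_zero, Nat.mod_self, Function.iterate_zero,
          Set.image_id]
        exact fun x hx => hx
      · simp only [Function.iterate_zero, Set.image_id, hI, Nat.zero_mod]
    | succ m ih =>
      intro hm
      obtain ⟨a, b, hab, hsubI, himg, hexact⟩ := ih (le_of_lt (Nat.lt_of_succ_le hm))
      set j := k - (m + 1) with hj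
      have hjk : j < k := by omega
      have hjm : j % k = j := Nat.mod_eq_of_lt hjk
      have hj1 : j + 1 = k - m := by omega
      have hcov : Set.Icc a b ⊆ f '' Set.Icc (u j) (v j) := by
        have := hloop' j hjk
        rw [hj1] at this
        refine hsubI.trans (this.trans ?_)
        simp only [hI, hjm]
        exact fun x hx => hx
      obtain ⟨a', b', hab', hsub', heq'⟩ := aux2 f (u j) (v j) a b hab
        (hcont.mono (hsub j hjk)) hcov
      refine ⟨a', b', hab', ?_, ?_, ?_⟩
      · simp only [hI, hjm]; exact hsub'
      · intro i hi
        match i with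
        | 0 =>
          simp only [Function.iterate_zero, Set.image_id, Nat.add_zero, hI, hjm]
          exact hsub'
        | Nat.succ i' =>
          have hi' : i' ≤ m := Nat.succ_le_succ_iff.mp hi
          have : f^[i' + 1] '' Set.Icc a' b' = f^[i'] '' Set.Icc a b := by
            rw [Function.iterate_succ, Set.image_comp, heq']
          rw [this]
          have hidx : k - (m + 1) + (i' + 1) = k - m + i' := by omega
          rw [hidx]
          exact himg i' hi'
      · rw [Function.iterate_succ, Set.image_comp, heq', hexact]
  obtain ⟨a, b, hab, hsubI0, himg, hexact⟩ := chain k le_rfl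
  rw [Nat.sub_self] at hsubI0 himg
  simp only [Nat.zero_add] at himg
  -- continuity of iterates on [a,b]
  have hiter : ∀ i ≤ k, ContinuousOn (f^[i]) (Set.Icc a b) := by
    intro i
    induction i with
    | zero => intro _; simpa using continuousOn_id
    | succ i ih =>
      intro hi
      rw [Function.iterate_succ']
      refine hcont.comp (ih (by omega)) ?_
      intro x hx
      exact hIsub i (himg i (by omega) (Set.mem_image_of_mem _ hx))
  -- fixed point of f^[k] on [a,b]
  have hI0 : I 0 = Set.Icc (u 0) (v 0) := by simp [hI]
  have hsub0 : Set.Icc a b ⊆ Set.Icc (u 0) (v 0) := hI0 ▸ hsubI0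
  have hexact' : f^[k] '' Set.Icc a b = Set.Icc (u 0) (v 0) := hI0 ▸ hexact
  have hu0v0 : u 0 ≤ v 0 := huv 0 hk
  obtain ⟨p, hp, hfp⟩ : u 0 ∈ f^[k] '' Set.Icc a b := by rw [hexact']; exact Set.left_mem_Icc.2 hu0v0
  obtain ⟨q, hq, hfq⟩ : v 0 ∈ f^[k] '' Set.Icc a b := by rw [hexact']; exact Set.right_mem_Icc.2 hu0v0
  have hap : u 0 ≤ a := (hsub0 (Set.left_mem_Icc.2 hab)).1
  have hbq : b ≤ v 0 := (hsub0 (Set.right_mem_Icc.2 hab)).2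
  set g : ℝ → ℝ := fun x => f^[k] x - x with hg
  have hgc : ContinuousOn g (Set.Icc a b) := (hiter k le_rfl).sub continuousOn_id
  have hgp : g p ≤ 0 := by simp only [hg]; rw [hfp]; linarith [hp.1]
  have hgq : 0 ≤ g q := by simp only [hg]; rw [hfq]; linarith [hq.2]
  have huIcc : Set.uIcc p q ⊆ Set.Icc a b := Set.uIcc_subset_Icc hp hq
  have h0 : (0:ℝ) ∈ Set.uIcc (g p) (g q) := Set.mem_uIcc.2 (Or.inl ⟨hgp, hgq⟩)
  obtain ⟨x, hx, hgx⟩ := intermediate_value_uIcc (hgc.mono huIcc) h0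
  refine ⟨x, ?_, by simpa [hg, sub_eq_zero] using hgx⟩
  intro j hj
  have hmem : f^[j] x ∈ I j := himg j (le_of_lt hj) (Set.mem_image_of_mem _ (huIcc hx))
  simpa [hI, Nat.mod_eq_of_lt hj] using hmem


end OverRotation
end

section
/- Let f be a continuous piecewise-monotone interval map with a unique fixed point a, and let ᾱ = (I₀, I₁, …, I_{k−1}) be an admissible loop of non-degenerate intervals with over-rotation pair (p/2, k). Suppose it is NOT the case that k is even and for every j the intervals I_j and I_{j+1 (mod k)} lie on opposite sides of a. Then there exists a periodic point x ∈ I₀ with x ≠ a such that f^j(x) ∈ I_j for 0 ≤ j ≤ k−1, f^k(x) = x, and the over-rotation number of the orbit of x equals p/(2k). If moreover the sequence (φ_a(I₀), φ_a(I₁), …, φ_a(I_{k−1})) is non-repetitive, then the over-rotation pair of the orbit of x is (p/2, k). -/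
open Set Function
open scoped Classical

/-!
Following the loop with the covering lemma (a compact interval whose image covers `[c, d]` has
a subinterval mapped onto `[c, d]`) gives a closed interval `Q ⊆ I₀` whose points follow the loop
for `k` steps and with `f^k(Q) = I₀`, so `f^k` has a fixed point in `Q`. Suppose `a` were the only
one. Then `f^k y - y` has the sign of `y - a` on `Q`: `f^k` pushes the points of `Q` away from `a`.
Since `a` is the only fixed point, `f z - z` has the sign of `a - z`, and by piecewise
monotonicity each side of `a` is, near `a`, either kept by `f` (its points then move towards `a`)
or sent to the other side. If the orbit of a point `y ∈ Q` close to `a` ever visited a kept side,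
it would stay there approaching `a`, contradicting the repulsion; so the orbit alternates sides,
and hence so does the loop, with `k` even: the excluded case.

Since displacements always point towards `a`, the orbit of the periodic point turns exactly
when it crosses `a`, so its turns are those of the loop, and counting over the minimal period
`q ∣ k` gives the same over-rotation number.
-/

open Topology
open SignType (sign)

section Sign

variable {a u v w : ℝ}

lemma sign_sub_eq_of_mem_uIcc (hv : v ∈ uIcc a w) (hva : v ≠ a) :
    sign (v - a) = sign (w - a) := by
  rw [mem_uIcc] at hv
  rcases hva.lt_or_gt with h | h
  · have hw : w < a := by rcases hv with hv | hv <;> linarith [hv.1, hv.2]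
    rw [sign_neg (sub_neg.2 h), sign_neg (sub_neg.2 hw)]
  · have hw : a < w := by rcases hv with hv | hv <;> linarith [hv.1, hv.2]
    rw [sign_pos (sub_pos.2 h), sign_pos (sub_pos.2 hw)]

lemma abs_sub_lt_abs_sub_of_sign (hwa : w ≠ a) (hside : sign (v - a) = sign (w - a))
    (hstep : sign (v - w) = -sign (w - a)) : |v - a| < |w - a| := by
  rcases hwa.lt_or_gt with h | h
  · rw [sign_neg (sub_neg.2 h), sign_eq_neg_one_iff, sub_neg] at hside
    rw [sign_neg (sub_neg.2 h), neg_neg, sign_eq_one_iff, sub_pos] at hstep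
    rw [abs_of_neg (sub_neg.2 hside), abs_of_neg (sub_neg.2 h)]
    linarith
  · rw [sign_pos (sub_pos.2 h), sign_eq_one_iff, sub_pos] at hside
    rw [sign_pos (sub_pos.2 h), sign_eq_neg_one_iff, sub_neg] at hstep
    rw [abs_of_pos (sub_pos.2 hside), abs_of_pos (sub_pos.2 h)]
    linarith

lemma sign_sub_eq_and_abs_lt_of_sign_sub (hwa : w ≠ a) (h : sign (v - w) = sign (w - a)) :
    sign (v - a) = sign (w - a) ∧ |w - a| < |v - a| := by
  rcases hwa.lt_or_gt with hw | hw
  · rw [sign_neg (sub_neg.2 hw), sign_eq_neg_one_iff, sub_neg] at h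
    rw [sign_neg (sub_neg.2 hw), sign_neg (by linarith), abs_of_neg (sub_neg.2 hw),
      abs_of_neg (by linarith)]
    exact ⟨rfl, by linarith⟩
  · rw [sign_pos (sub_pos.2 hw), sign_eq_one_iff, sub_pos] at h
    rw [sign_pos (sub_pos.2 hw), sign_pos (by linarith), abs_of_pos (sub_pos.2 hw),
      abs_of_pos (by linarith)]
    exact ⟨rfl, by linarith⟩

lemma eq_of_mem_uIcc_of_sign_sub_eq (ha : a ∈ uIcc v w) (h : sign (v - a) = sign (w - a)) :
    v = a := by
  by_contra hva
  rw [mem_uIcc] at ha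
  rcases lt_or_gt_of_ne hva with hv | hv
  · rw [sign_neg (sub_neg.2 hv), eq_comm, sign_eq_neg_one_iff, sub_neg] at h
    rcases ha with ha | ha <;> linarith [ha.1, ha.2]
  · rw [sign_pos (sub_pos.2 hv), eq_comm, sign_eq_one_iff, sub_pos] at h
    rcases ha with ha | ha <;> linarith [ha.1, ha.2]

lemma zero_mem_uIcc_of_sign_ne (h : sign u ≠ sign v) : (0 : ℝ) ∈ uIcc u v := by
  rw [mem_uIcc]
  rcases lt_trichotomy u 0 with hu | hu | hu <;> rcases lt_trichotomy v 0 with hv | hv | hv <;>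
    simp_all [sign_neg, sign_pos, le_of_lt]

lemma lt_and_lt_or_of_sign_sub_eq_neg (hu : u ≠ a) (h : sign (v - a) = -sign (u - a)) :
    (u < a ∧ a < v) ∨ (v < a ∧ a < u) := by
  rcases hu.lt_or_gt with hu | hu
  · rw [sign_neg (sub_neg.2 hu), neg_neg, sign_eq_one_iff, sub_pos] at h
    exact Or.inl ⟨hu, h⟩
  · rw [sign_pos (sub_pos.2 hu), sign_eq_neg_one_iff, sub_neg] at h
    exact Or.inr ⟨h, hu⟩

lemma mul_neg_iff_of_sign_mul_eq {u' v' : ℝ} (h : sign (u * v) = sign (u' * v')) :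
    u * v < 0 ↔ u' * v' < 0 := by
  rw [← sign_eq_neg_one_iff, h, sign_eq_neg_one_iff]

lemma StrictMonoOn.sign_sub {f : ℝ → ℝ} {s : Set ℝ} (hf : StrictMonoOn f s) (hv : v ∈ s)
    (hw : w ∈ s) : sign (f v - f w) = sign (v - w) := by
  rcases lt_trichotomy v w with h | rfl | h
  · rw [sign_neg (sub_neg.2 h), sign_neg (sub_neg.2 (hf hv hw h))]
  · simp
  · rw [sign_pos (sub_pos.2 h), sign_pos (sub_pos.2 (hf hw hv h))]

lemma StrictAntiOn.sign_sub {f : ℝ → ℝ} {s : Set ℝ} (hf : StrictAntiOn f s) (hv : v ∈ s)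
    (hw : w ∈ s) : sign (f v - f w) = -sign (v - w) := by
  rcases lt_trichotomy v w with h | rfl | h
  · rw [sign_neg (sub_neg.2 h), sign_pos (sub_pos.2 (hf hv hw h))]; rfl
  · simp
  · rw [sign_pos (sub_pos.2 h), sign_neg (sub_neg.2 (hf hw hv h))]

end Sign

section Covering

lemma mem_uIcc_or_mem_uIcc_of_notMem_uIcc {y₁ y₂ w : ℝ} (hw : w ∉ uIcc y₁ y₂) :
    y₂ ∈ uIcc y₁ w ∨ y₁ ∈ uIcc w y₂ := by
  simp only [mem_uIcc, not_or, not_and_or, not_le] at hw ⊢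
  rcases le_total y₁ y₂ with h | h <;> rcases hw with ⟨hw₁ | hw₁, hw₂ | hw₂⟩ <;>
    first
    | exact Or.inl (Or.inl ⟨by linarith, by linarith⟩)
    | exact Or.inl (Or.inr ⟨by linarith, by linarith⟩)
    | exact Or.inr (Or.inl ⟨by linarith, by linarith⟩)
    | exact Or.inr (Or.inr ⟨by linarith, by linarith⟩)

variable {g : ℝ → ℝ}

lemma exists_Icc_image_eq_uIcc {u v : ℝ} (huv : u ≤ v) (hg : ContinuousOn g (Icc u v)) :
    ∃ s t, Icc s t ⊆ Icc u v ∧ g '' Icc s t = uIcc (g u) (g v) := by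
  have hcompact : ∀ {p q : ℝ} (c : ℝ), Icc p q ⊆ Icc u v → IsCompact (Icc p q ∩ g ⁻¹' {c}) :=
    fun c hpq => isCompact_Icc.of_isClosed_subset
      ((hg.mono hpq).preimage_isClosed_of_isClosed isClosed_Icc isClosed_singleton)
      inter_subset_left
  -- `s` is the last time `g` takes the value `g u`, `t` the first time after `s` it takes `g v`
  obtain ⟨s, ⟨⟨hus, hsv⟩, hgs⟩, hs_max⟩ :=
    (hcompact (g u) subset_rfl).exists_isGreatest ⟨u, left_mem_Icc.2 huv, rfl⟩
  obtain ⟨t, ⟨⟨hst, htv⟩, hgt⟩, ht_min⟩ :=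
    (hcompact (g v) (Icc_subset_Icc_left hus)).exists_isLeast ⟨v, right_mem_Icc.2 hsv, rfl⟩
  rw [mem_preimage, mem_singleton_iff] at hgs hgt
  have hst_sub : Icc s t ⊆ Icc u v := Icc_subset_Icc hus htv
  refine ⟨s, t, hst_sub, Subset.antisymm ?_ ?_⟩
  · rintro _ ⟨x, hx, rfl⟩
    by_contra hout
    have hxt : Icc s x ⊆ Icc s t := Icc_subset_Icc_right hx.2
    have hsx : Icc x t ⊆ Icc s t := Icc_subset_Icc_left hx.1
    rcases mem_uIcc_or_mem_uIcc_of_notMem_uIcc hout with h | h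
    · rw [← hgs] at h
      rw [← uIcc_of_le hx.1] at hxt
      obtain ⟨z, hz, hgz⟩ := intermediate_value_uIcc (hg.mono (hxt.trans hst_sub)) h
      rw [uIcc_of_le hx.1] at hz
      have : t ≤ z := ht_min ⟨⟨hz.1, hz.2.trans (hx.2.trans htv)⟩, hgz⟩
      exact hout (le_antisymm hx.2 (this.trans hz.2) ▸ hgt ▸ right_mem_uIcc)
    · rw [← hgt] at h
      rw [← uIcc_of_le hx.2] at hsx
      obtain ⟨z, hz, hgz⟩ := intermediate_value_uIcc (hg.mono (hsx.trans hst_sub)) h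
      rw [uIcc_of_le hx.2] at hz
      have : z ≤ s := hs_max ⟨⟨hus.trans (hx.1.trans hz.1), hz.2.trans htv⟩, hgz⟩
      exact hout ((le_antisymm (hz.1.trans this) hx.1).symm ▸ hgs ▸ left_mem_uIcc)
  · have := intermediate_value_uIcc (f := g) (a := s) (b := t) (by
      rw [uIcc_of_le hst]; exact hg.mono hst_sub)
    rwa [uIcc_of_le hst, hgs, hgt] at this

lemma exists_Icc_subset_image_eq_uIcc {α β c d : ℝ} (hg : ContinuousOn g (Icc α β))
    (h : uIcc c d ⊆ g '' Icc α β) : ∃ s t, Icc s t ⊆ Icc α β ∧ g '' Icc s t = uIcc c d := by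
  obtain ⟨x, hx, rfl⟩ := h left_mem_uIcc
  obtain ⟨y, hy, rfl⟩ := h right_mem_uIcc
  rcases le_total x y with hxy | hyx
  · have hsub := Icc_subset_Icc hx.1 hy.2
    obtain ⟨s, t, hst, himg⟩ := exists_Icc_image_eq_uIcc hxy (hg.mono hsub)
    exact ⟨s, t, hst.trans hsub, himg⟩
  · have hsub := Icc_subset_Icc hy.1 hx.2
    obtain ⟨s, t, hst, himg⟩ := exists_Icc_image_eq_uIcc hyx (hg.mono hsub)
    exact ⟨s, t, hst.trans hsub, himg.trans (uIcc_comm _ _)⟩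

lemma exists_Icc_mapsTo_iterate {f : ℝ → ℝ} {D : Set ℝ} (hcont : ContinuousOn f D)
    (hmaps : MapsTo f D D) {c d : ℕ → ℝ} (hD : uIcc (c 0) (d 0) ⊆ D) (n : ℕ)
    (hcover : ∀ j < n, uIcc (c (j + 1)) (d (j + 1)) ⊆ f '' uIcc (c j) (d j)) :
    ∃ u v, Icc u v ⊆ uIcc (c 0) (d 0) ∧ (∀ j ≤ n, MapsTo f^[j] (Icc u v) (uIcc (c j) (d j))) ∧
      f^[n] '' Icc u v = uIcc (c n) (d n) := by
  induction n with
  | zero => exact ⟨c 0 ⊓ d 0, c 0 ⊔ d 0, subset_rfl, fun j hj => by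
      rw [Nat.le_zero.1 hj]; exact mapsTo_id _, image_id _⟩
  | succ n ih =>
    obtain ⟨u, v, hQ, hmapsQ, himg⟩ := ih fun j hj => hcover j (by omega)
    have hcov : uIcc (c (n + 1)) (d (n + 1)) ⊆ f^[n + 1] '' Icc u v := by
      rw [iterate_succ', image_comp, himg]
      exact hcover n n.lt_succ_self
    obtain ⟨s, t, hst, himg'⟩ :=
      exists_Icc_subset_image_eq_uIcc ((hcont.iterate hmaps (n + 1)).mono (hQ.trans hD)) hcov
    refine ⟨s, t, hst.trans hQ, fun j hj => ?_, himg'⟩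
    rcases hj.lt_or_eq with hj | rfl
    · exact (hmapsQ j (by omega)).mono_left hst
    · exact himg' ▸ mapsTo_image _ _

end Covering

lemma mem_and_sign_sub_eq_of_fixedPt_unique {F : ℝ → ℝ} {a b u v : ℝ} (hba : b ≠ a)
    (hQ : Icc u v ⊆ uIcc a b) (hF : ContinuousOn F (Icc u v)) (himg : F '' Icc u v = uIcc a b)
    (hFa : F a = a) (hfix : ∀ x ∈ Icc u v, F x = x → x = a) :
    a ∈ Icc u v ∧ ∃ w ∈ Icc u v, w ≠ a ∧
      ∀ y ∈ Icc u v, y ≠ a → sign (F y - y) = sign (y - a) := by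
  obtain ⟨w₁, hw₁, hFw₁⟩ : a ∈ F '' Icc u v := himg ▸ left_mem_uIcc
  obtain ⟨w₂, hw₂, hFw₂⟩ : b ∈ F '' Icc u v := himg ▸ right_mem_uIcc
  have hside : ∀ y ∈ Icc u v, y ≠ a → sign (y - a) = sign (b - a) :=
    fun y hy hya => sign_sub_eq_of_mem_uIcc (hQ hy) hya
  have hzero : ∀ y ∈ Icc u v, ∀ z ∈ Icc u v,
      sign (F y - y) ≠ sign (F z - z) → a ∈ uIcc y z := by
    intro y hy z hz h
    obtain ⟨c, hc, hc0⟩ := intermediate_value_uIcc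
      ((hF.sub continuousOn_id).mono (uIcc_subset_Icc hy hz)) (zero_mem_uIcc_of_sign_ne h)
    rwa [← hfix c (uIcc_subset_Icc hy hz hc) (sub_eq_zero.1 hc0)]
  have hw₂a : w₂ ≠ a := fun h => hba (by rw [← hFw₂, h, hFa])
  have hw₂b : w₂ ≠ b := fun h => hw₂a (hfix w₂ hw₂ (hFw₂.trans h.symm))
  have hσ : sign (b - a) ≠ 0 := sign_ne_zero.2 (sub_ne_zero.2 hba)
  have hFw₂' : sign (F w₂ - w₂) = sign (b - a) := by
    have := sign_sub_eq_of_mem_uIcc (uIcc_comm a b ▸ hQ hw₂) hw₂b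
    rw [hFw₂, ← neg_sub w₂ b, ← neg_sub a b, Left.sign_neg, Left.sign_neg, this]
  refine ⟨uIcc_subset_Icc hw₁ hw₂ (hzero w₁ hw₁ w₂ hw₂ ?_), w₂, hw₂, hw₂a, fun y hy hya => ?_⟩
  · rw [hFw₁, hFw₂']
    rcases eq_or_ne w₁ a with rfl | hw₁a
    · simpa using hσ.symm
    · rw [← neg_sub, Left.sign_neg, hside w₁ hw₁ hw₁a]
      exact fun h => hσ (SignType.neg_eq_self_iff.1 h)
  · by_contra h
    rw [hside y hy hya, ← hFw₂'] at h
    exact hya (eq_of_mem_uIcc_of_sign_sub_eq (hzero y hy w₂ hw₂ h)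
      ((hside y hy hya).trans (hside w₂ hw₂ hw₂a).symm))

lemma exists_mem_uIoo_of_eventually {P : ℝ → Prop} {D : Set ℝ} {a w : ℝ} (hwa : w ≠ a)
    (hD : uIoo a w ⊆ D) (h : ∀ᶠ y in 𝓝[D] a, P y) : ∃ y ∈ uIoo a w, P y := by
  have : (𝓝[uIoo a w] a).NeBot := mem_closure_iff_nhdsWithin_neBot.1 (by
    rw [uIoo, closure_Ioo (inf_lt_sup.2 hwa.symm).ne]
    exact ⟨inf_le_left, le_sup_left⟩)
  obtain ⟨y, hPy, hy⟩ := ((h.filter_mono (nhdsWithin_mono _ hD)).and self_mem_nhdsWithin).exists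
  exact ⟨y, hy, hPy⟩

lemma exists_lt_and_not_succ {P : ℕ → Prop} {n : ℕ} (h0 : P 0) (hn : ¬P n) :
    ∃ i < n, P i ∧ ¬P (i + 1) := by
  induction n with
  | zero => exact absurd h0 hn
  | succ n ih =>
    by_cases hPn : P n
    · exact ⟨n, n.lt_succ_self, hPn, hn⟩
    · obtain ⟨i, hi, hPi⟩ := ih hPn
      exact ⟨i, hi.trans n.lt_succ_self, hPi⟩

lemma count_mul_of_periodic {P : ℕ → Prop} [DecidablePred P] {q : ℕ} (hP : Periodic P q)
    (m : ℕ) : Nat.count P (m * q) = m * Nat.count P q := by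
  induction m with
  | zero => simp
  | succ m ih =>
    rw [add_mul, one_mul, Nat.count_add, ih, add_mul, one_mul]
    congr 2
    funext i
    rw [add_comm]
    exact hP.nat_mul m i

lemma iterate_ne_of_isPeriodicPt {α : Type*} {f : α → α} {x a : α} {k : ℕ}
    (hper : IsPeriodicPt f k x) (hk : 0 < k) (hfa : f a = a) (hxa : x ≠ a) (j : ℕ) :
    f^[j] x ≠ a := by
  intro h
  apply hxa
  rw [← (hper.mul_const j).eq, ← Nat.sub_add_cancel (Nat.le_mul_of_pos_left j hk),
    iterate_add_apply, h, iterate_fixed hfa]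

namespace OverRotation

section LocalDynamics

variable {f : ℝ → ℝ} {lo hi a : ℝ}

lemma sign_apply_sub_self (hcont : ContinuousOn f (Icc lo hi))
    (hmaps : MapsTo f (Icc lo hi) (Icc lo hi)) (hfa : f a = a)
    (hauniq : ∀ b ∈ Icc lo hi, f b = b → b = a) {z : ℝ} (hz : z ∈ Icc lo hi) :
    sign (f z - z) = -sign (z - a) := by
  have hg : ContinuousOn (fun y => f y - y) (Icc lo hi) := hcont.sub continuousOn_id
  rcases lt_trichotomy z a with hza | rfl | hza
  · have : z < f z := by
      by_contra! hle
      obtain ⟨c, hc, hc0⟩ := intermediate_value_Icc' hz.1 (hg.mono (Icc_subset_Icc_right hz.2))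
        ⟨sub_nonpos.2 hle, sub_nonneg.2 (hmaps ⟨le_rfl, hz.1.trans hz.2⟩).1⟩
      have := hauniq c ⟨hc.1, hc.2.trans hz.2⟩ (sub_eq_zero.1 hc0)
      linarith [hc.2]
    rw [sign_pos (sub_pos.2 this), sign_neg (sub_neg.2 hza), neg_neg]
  · simp [hfa]
  · have : f z < z := by
      by_contra! hle
      obtain ⟨c, hc, hc0⟩ := intermediate_value_Icc' hz.2 (hg.mono (Icc_subset_Icc_left hz.1))
        ⟨sub_nonpos.2 (hmaps ⟨hz.1.trans hz.2, le_rfl⟩).2, sub_nonneg.2 hle⟩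
      have := hauniq c ⟨hz.1.trans hc.1, hc.2⟩ (sub_eq_zero.1 hc0)
      linarith [hc.1]
    rw [sign_neg (sub_neg.2 this), sign_pos (sub_pos.2 hza)]

lemma PiecewiseMonotoneOn.exists_strictMonoOn_or_strictAntiOn_right
    (hpm : PiecewiseMonotoneOn f lo hi) (ha : a ∈ Icc lo hi) :
    ∃ b > a, StrictMonoOn f (Icc a b ∩ Icc lo hi) ∨ StrictAntiOn f (Icc a b ∩ Icc lo hi) := by
  obtain ⟨K, t, -, ht0, htK, -, hpiece⟩ := hpm
  rcases ha.2.lt_or_eq with hahi | rfl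
  · obtain ⟨i, hiK, hti, hti'⟩ := exists_lt_and_not_succ (P := fun i => t i ≤ a) (n := K)
      (by simpa [ht0] using ha.1) (by simpa [htK] using hahi)
    have hsub : Icc a (t (i + 1)) ∩ Icc lo hi ⊆ Icc (t i) (t (i + 1)) :=
      fun z hz => ⟨hti.trans hz.1.1, hz.1.2⟩
    exact ⟨t (i + 1), not_le.1 hti', (hpiece i hiK).imp (·.mono hsub) (·.mono hsub)⟩
  · refine ⟨a + 1, by linarith, Or.inl (Set.Subsingleton.strictMonoOn f ?_)⟩
    exact subsingleton_singleton.anti fun z hz => le_antisymm hz.2.2 hz.1.1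

lemma PiecewiseMonotoneOn.exists_strictMonoOn_or_strictAntiOn_left
    (hpm : PiecewiseMonotoneOn f lo hi) (ha : a ∈ Icc lo hi) :
    ∃ b < a, StrictMonoOn f (Icc b a ∩ Icc lo hi) ∨ StrictAntiOn f (Icc b a ∩ Icc lo hi) := by
  obtain ⟨K, t, -, ht0, htK, -, hpiece⟩ := hpm
  rcases ha.1.lt_or_eq with hloa | rfl
  · obtain ⟨i, hiK, hti, hti'⟩ := exists_lt_and_not_succ (P := fun i => t i < a) (n := K)
      (by simpa [ht0] using hloa) (by simpa [htK] using ha.2)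
    have hsub : Icc (t i) a ∩ Icc lo hi ⊆ Icc (t i) (t (i + 1)) :=
      fun z hz => ⟨hz.1.1, hz.1.2.trans (not_lt.1 hti')⟩
    exact ⟨t i, hti, (hpiece i hiK).imp (·.mono hsub) (·.mono hsub)⟩
  · refine ⟨lo - 1, by linarith, Or.inl (Set.Subsingleton.strictMonoOn f ?_)⟩
    exact subsingleton_singleton.anti fun z hz => le_antisymm hz.1.2 hz.2.1

def SendsSide (f : ℝ → ℝ) (D : Set ℝ) (a η : ℝ) (s t : SignType) : Prop :=
  ∀ z ∈ D, |z - a| < η → sign (z - a) = s → sign (f z - a) = t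

lemma sendsSide_of_strictMonoOn {D G : Set ℝ} {η : ℝ} {s : SignType}
    (hG : ∀ z ∈ D, |z - a| < η → sign (z - a) = s → z ∈ G) (haG : a ∈ G) (hfa : f a = a)
    (hf : StrictMonoOn f G) : SendsSide f D a η s s := by
  intro z hz hzη hzs
  have := hf.sign_sub (hG z hz hzη hzs) haG
  rwa [hfa, hzs] at this

lemma sendsSide_of_strictAntiOn {D G : Set ℝ} {η : ℝ} {s : SignType}
    (hG : ∀ z ∈ D, |z - a| < η → sign (z - a) = s → z ∈ G) (haG : a ∈ G) (hfa : f a = a)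
    (hf : StrictAntiOn f G) : SendsSide f D a η s (-s) := by
  intro z hz hzη hzs
  have := hf.sign_sub (hG z hz hzη hzs) haG
  rwa [hfa, hzs] at this

lemma PiecewiseMonotoneOn.exists_sendsSide (hpm : PiecewiseMonotoneOn f lo hi)
    (ha : a ∈ Icc lo hi) (hfa : f a = a) :
    ∃ η > 0, ∀ s, SendsSide f (Icc lo hi) a η s s ∨ SendsSide f (Icc lo hi) a η s (-s) := by
  obtain ⟨b, hab, hR⟩ := hpm.exists_strictMonoOn_or_strictAntiOn_right ha
  obtain ⟨c, hca, hL⟩ := hpm.exists_strictMonoOn_or_strictAntiOn_left ha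
  refine ⟨min (b - a) (a - c), lt_min (sub_pos.2 hab) (sub_pos.2 hca), fun s => ?_⟩
  have hsides : ∀ {G : Set ℝ}, a ∈ G →
      (∀ z ∈ Icc lo hi, |z - a| < min (b - a) (a - c) → sign (z - a) = s → z ∈ G) →
      StrictMonoOn f G ∨ StrictAntiOn f G →
      SendsSide f (Icc lo hi) a (min (b - a) (a - c)) s s ∨
        SendsSide f (Icc lo hi) a (min (b - a) (a - c)) s (-s) := fun haG hG h =>
    h.imp (sendsSide_of_strictMonoOn hG haG hfa) (sendsSide_of_strictAntiOn hG haG hfa)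
  rcases s.trichotomy with rfl | rfl | rfl
  · refine hsides (G := Icc c a ∩ Icc lo hi) ⟨⟨hca.le, le_rfl⟩, ha⟩
      (fun z hz hzη hzs => ⟨⟨?_, ?_⟩, hz⟩) hL
    · have := (abs_lt.1 (hzη.trans_le (min_le_right _ _))).1
      linarith
    · exact (sub_neg.1 (sign_eq_neg_one_iff.1 hzs)).le
  · refine Or.inl fun z _ _ hzs => ?_
    rw [sign_eq_zero_iff, sub_eq_zero] at hzs
    simp [hzs, hfa]
  · refine hsides (G := Icc a b ∩ Icc lo hi) ⟨⟨le_rfl, hab.le⟩, ha⟩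
      (fun z hz hzη hzs => ⟨⟨?_, ?_⟩, hz⟩) hR
    · exact (sub_pos.1 (sign_eq_one_iff.1 hzs)).le
    · have := (abs_lt.1 (hzη.trans_le (min_le_left _ _))).2
      linarith

end LocalDynamics

section Orbits

variable {f : ℝ → ℝ} {D : Set ℝ} {a η : ℝ}

lemma sign_iterate_sub_of_sendsSide_self (hmaps : MapsTo f D D)
    (hfix : ∀ z ∈ D, sign (f z - z) = -sign (z - a)) {s : SignType}
    (hs : SendsSide f D a η s s) {z : ℝ} (hz : z ∈ D) (hzη : |z - a| < η) (hza : z ≠ a)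
    (hzs : sign (z - a) = s) (n : ℕ) : sign (f^[n] z - a) = s ∧ |f^[n] z - a| ≤ |z - a| := by
  induction n with
  | zero => exact ⟨hzs, le_rfl⟩
  | succ n ih =>
    have hw : f^[n] z ∈ D := hmaps.iterate n hz
    have hwa : f^[n] z ≠ a := fun h => hza (by
      rw [h, sub_self, sign_zero, ← hzs, eq_comm, sign_eq_zero_iff, sub_eq_zero] at ih
      exact ih.1)
    have h1 : sign (f (f^[n] z) - a) = s := hs _ hw (ih.2.trans_lt hzη) ih.1
    rw [iterate_succ_apply']
    exact ⟨h1, (abs_sub_lt_abs_sub_of_sign hwa (h1.trans ih.1.symm) (hfix _ hw)).le.trans ih.2⟩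

lemma sign_iterate_sub_of_sendsSide_neg (hmaps : MapsTo f D D) {s : SignType}
    (hflip : SendsSide f D a η s (-s)) (hflip' : SendsSide f D a η (-s) s) {k : ℕ} {y : ℝ}
    (hy : y ∈ D) (hys : sign (y - a) = s) (hclose : ∀ j ≤ k, |f^[j] y - a| < η) :
    ∀ j ≤ k, sign (f^[j] y - a) = if Even j then s else -s := by
  intro j hj
  induction j with
  | zero => rwa [if_pos Even.zero]
  | succ j ih =>
    have hj' : j ≤ k := by omega
    rw [iterate_succ_apply']
    by_cases hev : Even j
    · rw [if_pos hev] at ih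
      rw [if_neg fun h => Nat.even_add_one.1 h hev]
      exact hflip _ (hmaps.iterate j hy) (hclose j hj') (ih hj')
    · rw [if_neg hev] at ih
      rw [if_pos (Nat.even_add_one.2 hev)]
      exact hflip' _ (hmaps.iterate j hy) (hclose j hj') (ih hj')

theorem even_and_alternating_of_repelling (hmaps : MapsTo f D D)
    (hfix : ∀ z ∈ D, sign (f z - z) = -sign (z - a))
    (hsides : ∀ s, SendsSide f D a η s s ∨ SendsSide f D a η s (-s)) {k : ℕ} (hk : 0 < k)
    {y : ℝ} (hy : y ∈ D) (hya : y ≠ a) (hclose : ∀ j ≤ k, |f^[j] y - a| < η)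
    (hrep : sign (f^[k] y - y) = sign (y - a)) :
    Even k ∧ ∀ j < k, sign (f^[j + 1] y - a) = -sign (f^[j] y - a) := by
  set s := sign (y - a)
  have hs0 : s ≠ 0 := sign_ne_zero.2 (sub_ne_zero.2 hya)
  obtain ⟨hks, hkfar⟩ := sign_sub_eq_and_abs_lt_of_sign_sub hya hrep
  have hyη : |y - a| < η := by simpa using hclose 0 k.zero_le
  have hfyη : |f y - a| < η := by simpa using hclose 1 hk
  have hk' : f^[k] y = f^[k - 1] (f y) := by
    rw [← iterate_succ_apply, Nat.succ_eq_add_one, Nat.sub_add_cancel hk]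
  have hfya : ∀ {t : SignType}, t ≠ 0 → sign (f y - a) = t → f y ≠ a := fun ht h hfy => ht (by
    rw [← h, hfy, sub_self, sign_zero])
  rcases hsides s with hpres | hflip
  · -- the side of `y` is kept, so `f^[k] y` would be closer to `a` than `y`
    have h1 : sign (f y - a) = s := hpres y hy hyη rfl
    have hfar := (sign_iterate_sub_of_sendsSide_self hmaps hfix hpres (hmaps hy) hfyη
      (hfya hs0 h1) h1 (k - 1)).2
    have hnear := abs_sub_lt_abs_sub_of_sign hya h1 (hfix y hy)
    rw [← hk'] at hfar
    linarith
  have h1 : sign (f y - a) = -s := hflip y hy hyη rfl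
  rcases hsides (-s) with hpres' | hflip'
  · -- the side of `f y` is kept, so `f^[k] y` would end up on the other side from `y`
    have := (sign_iterate_sub_of_sendsSide_self hmaps hfix hpres' (hmaps hy) hfyη
      (hfya (by simpa using hs0) h1) h1 (k - 1)).1
    rw [← hk', hks] at this
    exact absurd (SignType.neg_eq_self_iff.1 this.symm) hs0
  have halt := sign_iterate_sub_of_sendsSide_neg hmaps hflip (by rwa [neg_neg] at hflip') hy rfl
    hclose
  refine ⟨?_, fun j hj => ?_⟩
  · by_contra hodd
    have := halt k le_rfl
    rw [if_neg hodd, hks] at this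
    exact hs0 (SignType.neg_eq_self_iff.1 this.symm)
  · rw [halt j hj.le, halt (j + 1) hj]
    by_cases hev : Even j <;> simp [hev, Nat.even_add_one]

lemma eventually_abs_iterate_sub_lt (hcont : ContinuousOn f D) (hmaps : MapsTo f D D)
    (ha : a ∈ D) (hfa : f a = a) (hη : 0 < η) (k : ℕ) :
    ∀ᶠ y in 𝓝[D] a, ∀ j ≤ k, |f^[j] y - a| < η := by
  refine (finite_Iic k).eventually_all.2 fun j _ => ?_
  have := ((hcont.iterate hmaps j) a ha).tendsto
  rw [iterate_fixed hfa] at this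
  exact (Metric.tendsto_nhds.1 this η hη).mono fun y hy => by rwa [Real.dist_eq] at hy

end Orbits

lemma opposite_sides_of_sign_alternating {a : ℝ} {k : ℕ} {x e : ℕ → ℝ} (hx0 : x 0 ≠ a)
    (he : ∀ j < k, e j ≠ a) (hmem : ∀ j < k, x j ∈ uIcc a (e j))
    (hret : sign (x k - a) = sign (x 0 - a))
    (halt : ∀ j < k, sign (x (j + 1) - a) = -sign (x j - a)) :
    ∀ j < k, (e j < a ∧ a < e ((j + 1) % k)) ∨ (e ((j + 1) % k) < a ∧ a < e j) := by
  have hne : ∀ j ≤ k, x j ≠ a := by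
    intro j hj
    induction j with
    | zero => exact hx0
    | succ j ih =>
      intro h
      have := halt j (by omega)
      rw [h, sub_self, sign_zero] at this
      exact ih (by omega) (sub_eq_zero.1 (sign_eq_zero_iff.1 (by simpa using this.symm)))
  have hside : ∀ j < k, sign (x j - a) = sign (e j - a) :=
    fun j hj => sign_sub_eq_of_mem_uIcc (hmem j hj) (hne j hj.le)
  intro j hj
  refine lt_and_lt_or_of_sign_sub_eq_neg (he j hj) ?_
  rw [← hside j hj, ← halt j hj]
  rcases (show j + 1 ≤ k from hj).lt_or_eq with hlt | heq
  · rw [Nat.mod_eq_of_lt hlt, hside _ hlt]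
  · rw [heq, Nat.mod_self, hret, hside 0 (by omega)]

theorem exists_periodicPt_of_admissible_loop {f : ℝ → ℝ} {lo hi a : ℝ}
    (hcont : ContinuousOn f (Icc lo hi)) (hmaps : MapsTo f (Icc lo hi) (Icc lo hi))
    (hpm : PiecewiseMonotoneOn f lo hi) (ha : a ∈ Icc lo hi) (hfa : f a = a)
    (hauniq : ∀ b ∈ Icc lo hi, f b = b → b = a) {k : ℕ} (hk : 0 < k) {e : ℕ → ℝ}
    (he : ∀ j < k, e j ∈ Icc lo hi ∧ e j ≠ a)
    (hloop : ∀ j < k, uIcc a (e ((j + 1) % k)) ⊆ f '' uIcc a (e j))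
    (hnot : ¬ (Even k ∧ ∀ j < k,
        ((e j < a ∧ a < e ((j + 1) % k)) ∨ (e ((j + 1) % k) < a ∧ a < e j)))) :
    ∃ x ∈ uIcc a (e 0), x ≠ a ∧ (∀ j < k, f^[j] x ∈ uIcc a (e j)) ∧ f^[k] x = x := by
  have hD : uIcc a (e 0) ⊆ Icc lo hi := uIcc_subset_Icc ha (he 0 hk).1
  obtain ⟨u, v, hQ, hit, himg⟩ := exists_Icc_mapsTo_iterate (c := fun _ => a)
    (d := fun j => e (j % k)) hcont hmaps (by simpa using hD) k fun j hj => by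
      simpa [Nat.mod_eq_of_lt hj] using hloop j hj
  simp only [Nat.zero_mod, Nat.mod_self] at hQ himg
  have hit' : ∀ j < k, MapsTo f^[j] (Icc u v) (uIcc a (e j)) := fun j hj => by
    simpa [Nat.mod_eq_of_lt hj] using hit j hj.le
  by_contra! hno
  obtain ⟨haQ, w, hw, hwa, hrep⟩ := mem_and_sign_sub_eq_of_fixedPt_unique (he 0 hk).2 hQ
    ((hcont.iterate hmaps k).mono (hQ.trans hD)) himg (iterate_fixed hfa k)
    fun x hx hfx => by_contra fun hxa => hno x (hQ hx) hxa (fun j hj => hit' j hj hx) hfx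
  obtain ⟨η, hη, hsides⟩ := hpm.exists_sendsSide ha hfa
  have hsub : uIoo a w ⊆ Icc u v := uIoo_subset_uIcc_self.trans (uIcc_subset_Icc haQ hw)
  obtain ⟨y, hy, hclose⟩ := exists_mem_uIoo_of_eventually hwa (hsub.trans (hQ.trans hD))
    (eventually_abs_iterate_sub_lt hcont hmaps ha hfa hη k)
  have hya : y ≠ a := fun h => left_notMem_uIoo (h ▸ hy)
  obtain ⟨heven, halt⟩ := even_and_alternating_of_repelling hmaps
    (fun z hz => sign_apply_sub_self hcont hmaps hfa hauniq hz) hsides hk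
    (hQ.trans hD (hsub hy)) hya hclose (hrep y (hsub hy) hya)
  exact hnot ⟨heven, opposite_sides_of_sign_alternating (x := fun j => f^[j] y) hya
    (fun j hj => (he j hj).2) (fun j hj => hit' j hj (hsub hy))
    (sign_sub_eq_and_abs_lt_of_sign_sub hya (hrep y (hsub hy) hya)).1 halt⟩

section Counting

variable {f : ℝ → ℝ} {x : ℝ}

lemma switchCount_eq_count (n : ℕ) :
    switchCount f x n =
      Nat.count (fun i => (f^[i + 1] x - f^[i] x) * (f^[i + 2] x - f^[i + 1] x) < 0) n := by
  rw [switchCount, Nat.count_eq_card_filter_range, ← Set.ncard_coe_finset]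
  congr 1
  ext i
  simp only [Finset.coe_filter, Finset.mem_range]

lemma switchCount_mul_minimalPeriod (m : ℕ) :
    switchCount f x (m * minimalPeriod f x) = m * switchCount f x (minimalPeriod f x) := by
  simp only [switchCount_eq_count]
  refine count_mul_of_periodic (fun i => ?_) m
  have h : ∀ n, f^[n + minimalPeriod f x] x = f^[n] x := fun n => by
    rw [iterate_add_apply, iterate_minimalPeriod]
  simp only [add_right_comm i (minimalPeriod f x), h]

lemma switchCount_div_minimalPeriod {k : ℕ} (hper : IsPeriodicPt f k x) (hk : 0 < k) :
    (switchCount f x (minimalPeriod f x) : ℝ) / (2 * minimalPeriod f x) =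
      switchCount f x k / (2 * k) := by
  obtain ⟨m, hm⟩ := hper.minimalPeriod_dvd
  have hq : (minimalPeriod f x : ℝ) ≠ 0 := Nat.cast_ne_zero.2 (hper.minimalPeriod_pos hk).ne'
  have hm0 : (m : ℝ) ≠ 0 := by
    rintro h
    rw [Nat.cast_eq_zero.1 h, mul_zero] at hm
    omega
  rw [hm, mul_comm (minimalPeriod f x) m, switchCount_mul_minimalPeriod]
  push_cast
  field_simp

lemma switch_iff {D : Set ℝ} {a z : ℝ} (hmaps : MapsTo f D D)
    (hfix : ∀ z ∈ D, sign (f z - z) = -sign (z - a)) (hz : z ∈ D) :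
    (f z - z) * (f (f z) - f z) < 0 ↔ (z - a) * (f z - a) < 0 :=
  mul_neg_iff_of_sign_mul_eq <| by
    rw [sign_mul, sign_mul, hfix z hz, hfix _ (hmaps hz), neg_mul_neg]

lemma sign_iterate_sub_eq {a : ℝ} {k : ℕ} {e : ℕ → ℝ} (hper : IsPeriodicPt f k x) (hk : 0 < k)
    (hfa : f a = a) (hxa : x ≠ a) (hit : ∀ j < k, f^[j] x ∈ uIcc a (e j)) (i : ℕ) :
    sign (f^[i] x - a) = sign (e (i % k) - a) := by
  rw [← hper.iterate_mod_apply i]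
  exact sign_sub_eq_of_mem_uIcc (hit _ (Nat.mod_lt i hk))
    (iterate_ne_of_isPeriodicPt hper hk hfa hxa _)

lemma switchCount_eq_ncard_opposite {D : Set ℝ} {a : ℝ} {k : ℕ} {e : ℕ → ℝ}
    (hmaps : MapsTo f D D) (hfix : ∀ z ∈ D, sign (f z - z) = -sign (z - a)) (hx : x ∈ D)
    (hside : ∀ i, sign (f^[i] x - a) = sign (e (i % k) - a)) :
    switchCount f x k = Set.ncard {j : ℕ | j < k ∧
        ((e j < a ∧ a < e ((j + 1) % k)) ∨ (e ((j + 1) % k) < a ∧ a < e j))} := by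
  rw [switchCount]
  congr 1
  ext j
  refine and_congr_right fun hj => ?_
  have hsign : sign ((f^[j] x - a) * (f^[j + 1] x - a)) =
      sign ((e j - a) * (e ((j + 1) % k) - a)) := by
    rw [sign_mul, sign_mul, hside, hside, Nat.mod_eq_of_lt hj]
  rw [iterate_succ_apply' f (j + 1), iterate_succ_apply' f j,
    switch_iff hmaps hfix (hmaps.iterate j hx), ← iterate_succ_apply' f j,
    mul_neg_iff_of_sign_mul_eq hsign, mul_neg_iff, sub_pos, sub_neg, sub_neg, sub_pos]
  exact or_comm.trans (or_congr_right and_comm)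

lemma minimalPeriod_eq_of_nonrepetitive {a : ℝ} {k : ℕ} {e : ℕ → ℝ} (hper : IsPeriodicPt f k x)
    (hk : 0 < k) (hside : ∀ i, sign (f^[i] x - a) = sign (e (i % k) - a))
    (hnr : ∀ d, 0 < d → d < k → d ∣ k → ∃ j < k, ¬ ((a < e ((j + d) % k)) ↔ (a < e j))) :
    minimalPeriod f x = k := by
  by_contra hne
  obtain ⟨j, hj, hnj⟩ := hnr _ (hper.minimalPeriod_pos hk)
    ((Nat.le_of_dvd hk hper.minimalPeriod_dvd).lt_of_ne hne) hper.minimalPeriod_dvd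
  have : sign (e ((j + minimalPeriod f x) % k) - a) = sign (e j - a) := by
    rw [← hside, iterate_add_apply, iterate_minimalPeriod, hside, Nat.mod_eq_of_lt hj]
  rw [← sub_pos (a := e _), ← sub_pos (a := e j), ← sign_eq_one_iff, ← sign_eq_one_iff, this] at hnj
  exact hnj Iff.rfl

end Counting

theorem admissible_loop_generates_general (f : ℝ → ℝ) (lo hi a : ℝ)
    (hcont : ContinuousOn f (Set.Icc lo hi))
    (hmaps : Set.MapsTo f (Set.Icc lo hi) (Set.Icc lo hi))
    (hpm : PiecewiseMonotoneOn f lo hi)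
    (ha : a ∈ Set.Icc lo hi) (hfa : f a = a)
    (hauniq : ∀ b ∈ Set.Icc lo hi, f b = b → b = a)
    (k : ℕ) (hk : 0 < k) (e : ℕ → ℝ)
    (he : ∀ j < k, e j ∈ Set.Icc lo hi ∧ e j ≠ a)
    (hloop : ∀ j < k, Set.uIcc a (e ((j + 1) % k)) ⊆ f '' Set.uIcc a (e j))
    (p : ℕ)
    (hp : Set.ncard {j : ℕ | j < k ∧
        ((e j < a ∧ a < e ((j + 1) % k)) ∨ (e ((j + 1) % k) < a ∧ a < e j))} = p)
    (hnot : ¬ (Even k ∧ ∀ j < k,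
        ((e j < a ∧ a < e ((j + 1) % k)) ∨ (e ((j + 1) % k) < a ∧ a < e j)))) :
    ∃ x ∈ Set.uIcc a (e 0), x ≠ a ∧
      (∀ j < k, f^[j] x ∈ Set.uIcc a (e j)) ∧ f^[k] x = x ∧
      (switchCount f x (Function.minimalPeriod f x) : ℝ) /
          (2 * (Function.minimalPeriod f x : ℝ)) = (p : ℝ) / (2 * (k : ℝ)) ∧
      ((∀ d, 0 < d → d < k → d ∣ k →
          ∃ j < k, ¬ ((a < e ((j + d) % k)) ↔ (a < e j))) →
        Function.minimalPeriod f x = k ∧ switchCount f x k = p) := by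
  obtain ⟨x, hx0, hxa, hit, hxk⟩ :=
    exists_periodicPt_of_admissible_loop hcont hmaps hpm ha hfa hauniq hk he hloop hnot
  have hper : IsPeriodicPt f k x := hxk
  have hside := sign_iterate_sub_eq hper hk hfa hxa hit
  have hswitch : switchCount f x k = p := hp ▸ switchCount_eq_ncard_opposite hmaps
    (fun z hz => sign_apply_sub_self hcont hmaps hfa hauniq hz)
    (uIcc_subset_Icc ha (he 0 hk).1 hx0) hside
  refine ⟨x, hx0, hxa, hit, hxk, ?_, fun hnr =>
    ⟨minimalPeriod_eq_of_nonrepetitive hper hk hside hnr, hswitch⟩⟩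
  rw [switchCount_div_minimalPeriod hper hk, hswitch]

/-- Given a continuous piecewise-monotone interval map `f` with unique fixed point `a` and
an admissible loop `ᾱ = (I₀, …, I_{k-1})` of non-degenerate intervals, `I_j = [a, e j]`,
with over-rotation pair `(p/2, k)`, and assuming it is not the case that `k` is even and
consecutive intervals always lie on opposite sides of `a`, there is a periodic point
`x ∈ I₀`, `x ≠ a`, following the loop, with `f^[k] x = x`, whose over-rotation number is
`p/(2k)`; if moreover the sequence `(φ_a(I₀), …, φ_a(I_{k-1}))` is non-repetitive then the
over-rotation pair of the orbit of `x` is `(p/2, k)`. -/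
theorem admissible_loop_generates (f : ℝ → ℝ) (lo hi a : ℝ) (hle : lo ≤ hi)
    (hcont : ContinuousOn f (Set.Icc lo hi))
    (hmaps : Set.MapsTo f (Set.Icc lo hi) (Set.Icc lo hi))
    (hpm : PiecewiseMonotoneOn f lo hi)
    (ha : a ∈ Set.Icc lo hi) (hfa : f a = a)
    (hauniq : ∀ b ∈ Set.Icc lo hi, f b = b → b = a)
    (k : ℕ) (hk : 0 < k) (e : ℕ → ℝ)
    (he : ∀ j < k, e j ∈ Set.Icc lo hi ∧ e j ≠ a)
    (hloop : ∀ j < k, Set.uIcc a (e ((j + 1) % k)) ⊆ f '' Set.uIcc a (e j))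
    (p : ℕ)
    (hp : Set.ncard {j : ℕ | j < k ∧
        ((e j < a ∧ a < e ((j + 1) % k)) ∨ (e ((j + 1) % k) < a ∧ a < e j))} = p)
    (hnot : ¬ (Even k ∧ ∀ j < k,
        ((e j < a ∧ a < e ((j + 1) % k)) ∨ (e ((j + 1) % k) < a ∧ a < e j)))) :
    ∃ x ∈ Set.uIcc a (e 0), x ≠ a ∧
      (∀ j < k, f^[j] x ∈ Set.uIcc a (e j)) ∧ f^[k] x = x ∧
      (switchCount f x (Function.minimalPeriod f x) : ℝ) /
          (2 * (Function.minimalPeriod f x : ℝ)) = (p : ℝ) / (2 * (k : ℝ)) ∧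
      ((∀ d, 0 < d → d < k → d ∣ k →
          ∃ j < k, ¬ ((a < e ((j + d) % k)) ↔ (a < e j))) →
        Function.minimalPeriod f x = k ∧ switchCount f x k = p) :=
  admissible_loop_generates_general f lo hi a hcont hmaps hpm ha hfa hauniq k hk e he hloop p hp
    hnot

end OverRotation
end

section
/- Let f : [0,1] → [0,1] be a continuous map with a unique fixed point a, and let P be a cycle of f with over-rotation pair (p, q) and code L. If there exist x, y ∈ P with x >_a y and L(x) > L(y), then f has a cycle Q of minimal period less than q whose over-rotation number is less than p/q; consequently the over-rotation interval of f contains [l/k, 1/2] for some rational l/k < p/q with k < q. -/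
open Set Function
open scoped Classical

namespace OverRotation

/-- Exact covering: if `f` is continuous on `[A,B]`, there is a subinterval mapping
exactly onto `uIcc (f A) (f B)`. -/
lemma exact_core (f : ℝ → ℝ) {A B : ℝ} (hAB : A ≤ B) (hf : ContinuousOn f (Icc A B)) :
    ∃ A' B', A ≤ A' ∧ A' ≤ B' ∧ B' ≤ B ∧ f '' Icc A' B' = uIcc (f A) (f B) := by
  set c := f A with hc
  set d := f B with hd
  set S : Set ℝ := {t | t ∈ Icc A B ∧ f t = d} with hS
  have hSc : IsClosed S := by
    have := hf.preimage_isClosed_of_isClosed isClosed_Icc (isClosed_singleton (x := d))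
    simpa [hS, Set.inter_def, Set.preimage, Set.mem_singleton_iff] using this
  have hSne : S.Nonempty := ⟨B, ⟨hAB, le_rfl⟩, rfl⟩
  have hSbdd : BddBelow S := ⟨A, fun t ht => ht.1.1⟩
  set B' := sInf S with hB'
  have hB'S : B' ∈ S := hSc.csInf_mem hSne hSbdd
  have hAB' : A ≤ B' := hB'S.1.1
  have hB'B : B' ≤ B := hB'S.1.2
  have hfB' : f B' = d := hB'S.2
  set S2 : Set ℝ := {t | t ∈ Icc A B' ∧ f t = c} with hS2
  have hS2c : IsClosed S2 := by
    have := (hf.mono (Icc_subset_Icc le_rfl hB'B)).preimage_isClosed_of_isClosed isClosed_Icc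
      (isClosed_singleton (x := c))
    simpa [hS2, Set.inter_def, Set.preimage, Set.mem_singleton_iff] using this
  have hS2ne : S2.Nonempty := ⟨A, ⟨le_rfl, hAB'⟩, rfl⟩
  have hS2bdd : BddAbove S2 := ⟨B', fun t ht => ht.1.2⟩
  set A' := sSup S2 with hA'
  have hA'S : A' ∈ S2 := hS2c.csSup_mem hS2ne hS2bdd
  have hAA' : A ≤ A' := hA'S.1.1
  have hA'B' : A' ≤ B' := hA'S.1.2
  have hfA' : f A' = c := hA'S.2
  have hsub : Icc A' B' ⊆ Icc A B := Icc_subset_Icc hAA' hB'B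
  have hfc : ContinuousOn f (Icc A' B') := hf.mono hsub
  refine ⟨A', B', hAA', hA'B', hB'B, ?_⟩
  apply Set.Subset.antisymm
  · rintro v ⟨t, ht, rfl⟩
    by_contra hout
    -- two helper constructions
    have hfind_d : f t ≠ d → d ∈ uIcc (f A') (f t) → False := by
      intro hne hdmem
      have hA't : A' ≤ t := ht.1
      have hIV := intermediate_value_uIcc (f := f) (a := A') (b := t)
        (hfc.mono (by rw [Set.uIcc_of_le hA't]; exact Icc_subset_Icc le_rfl ht.2))
      obtain ⟨t', ht', hft'⟩ := hIV hdmem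
      rw [Set.uIcc_of_le hA't] at ht'
      have ht'S : t' ∈ S := ⟨⟨le_trans hAA' ht'.1, le_trans ht'.2 (le_trans ht.2 hB'B)⟩, hft'⟩
      have : B' ≤ t' := csInf_le hSbdd ht'S
      have htB' : t = B' := le_antisymm ht.2 (le_trans this ht'.2)
      exact hne (htB' ▸ hfB')
    have hfind_c : f t ≠ c → c ∈ uIcc (f t) (f B') → False := by
      intro hne hcmem
      have htB' : t ≤ B' := ht.2
      have hIV := intermediate_value_uIcc (f := f) (a := t) (b := B')
        (hfc.mono (by rw [Set.uIcc_of_le htB']; exact Icc_subset_Icc ht.1 le_rfl))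
      obtain ⟨t'', ht'', hft''⟩ := hIV hcmem
      rw [Set.uIcc_of_le htB'] at ht''
      have ht''S2 : t'' ∈ S2 := ⟨⟨le_trans hAA' (le_trans ht.1 ht''.1), ht''.2⟩, hft''⟩
      have : t'' ≤ A' := le_csSup hS2bdd ht''S2
      have htA' : t = A' := le_antisymm (le_trans ht''.1 this) ht.1
      exact hne (htA' ▸ hfA')
    rw [Set.mem_uIcc] at hout
    push_neg at hout
    rcases le_total c d with hcd | hdc
    · rcases lt_or_ge (f t) c with hlow | hge
      · -- f t < c ≤ d : find c on [t, B']
        exact hfind_c (ne_of_lt hlow) (by rw [hfB', Set.mem_uIcc]; left; exact ⟨le_of_lt hlow, hcd⟩)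
      · -- then f t > d
        have hhi : d < f t := hout.1 hge
        exact hfind_d (ne_of_gt hhi) (by rw [hfA', Set.mem_uIcc]; left; exact ⟨hcd, le_of_lt hhi⟩)
    · rcases lt_or_ge (f t) d with hlow | hge
      · -- f t < d ≤ c : find d on [A', t]
        exact hfind_d (ne_of_lt hlow) (by rw [hfA', Set.mem_uIcc]; right; exact ⟨le_of_lt hlow, hdc⟩)
      · have hhi : c < f t := hout.2 hge
        exact hfind_c (ne_of_gt hhi) (by rw [hfB', Set.mem_uIcc]; right; exact ⟨hdc, le_of_lt hhi⟩)
  · have hIV := intermediate_value_uIcc (f := f) (a := A') (b := B')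
      (hf.mono (by rw [Set.uIcc_of_le hA'B']; exact hsub))
    rw [Set.uIcc_of_le hA'B', hfA', hfB'] at hIV
    exact hIV

lemma Icc_subset_uIcc' {u v α β : ℝ} (hu : u ∈ uIcc α β) (hv : v ∈ uIcc α β) :
    Icc u v ⊆ uIcc α β := by
  rw [Set.uIcc, Set.mem_Icc] at hu hv
  rw [Set.uIcc]
  exact Icc_subset_Icc hu.1 hv.2

lemma exact_cover (f : ℝ → ℝ) {α β c d : ℝ} (hf : ContinuousOn f (uIcc α β))
    (hc : c ∈ f '' uIcc α β) (hd : d ∈ f '' uIcc α β) :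
    ∃ A' B', A' ≤ B' ∧ Icc A' B' ⊆ uIcc α β ∧ f '' Icc A' B' = uIcc c d := by
  obtain ⟨A, hA, rfl⟩ := hc
  obtain ⟨B, hB, rfl⟩ := hd
  rcases le_total A B with h | h
  · obtain ⟨A', B', h1, h2, h3, h4⟩ := exact_core f h (hf.mono (Icc_subset_uIcc' hA hB))
    exact ⟨A', B', h2, (Icc_subset_Icc h1 h3).trans (Icc_subset_uIcc' hA hB), h4⟩
  · obtain ⟨A', B', h1, h2, h3, h4⟩ := exact_core f h (hf.mono (Icc_subset_uIcc' hB hA))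
    exact ⟨A', B', h2, (Icc_subset_Icc h1 h3).trans (Icc_subset_uIcc' hB hA),
      by rw [h4, Set.uIcc_comm]⟩

/-- Loop of covering intervals gives a point following the loop periodically. -/
lemma loop_periodic_point (f : ℝ → ℝ) (hf : ContinuousOn f (Icc 0 1))
    (n : ℕ) (hn : 0 < n) (e₁ e₂ : ℕ → ℝ)
    (hsub : ∀ t < n, uIcc (e₁ t) (e₂ t) ⊆ Icc 0 1)
    (hcov : ∀ t, t + 1 < n → uIcc (e₁ (t+1)) (e₂ (t+1)) ⊆ uIcc (f (e₁ t)) (f (e₂ t)))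
    (hcov0 : uIcc (e₁ 0) (e₂ 0) ⊆ uIcc (f (e₁ (n-1))) (f (e₂ (n-1)))) :
    ∃ z, (∀ t < n, f^[t] z ∈ uIcc (e₁ t) (e₂ t)) ∧ f^[n] z = z := by
  set V : ℕ → Set ℝ := fun t => uIcc (e₁ t) (e₂ t) with hV
  -- image of uIcc under f covers uIcc of endpoint images
  have hIV : ∀ t, t < n → uIcc (f (e₁ t)) (f (e₂ t)) ⊆ f '' V t := fun t ht =>
    intermediate_value_uIcc (hf.mono (hsub t ht))
  -- backward chain
  have main : ∀ m : ℕ, 1 ≤ m → m ≤ n → ∃ A B : ℝ, A ≤ B ∧ Icc A B ⊆ V (n - m) ∧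
      (f^[m]) '' Icc A B = V 0 ∧ ∀ s, s < m → f^[s] '' Icc A B ⊆ V (n - m + s) := by
    intro m
    induction m with
    | zero => omega
    | succ m ih =>
      intro _ hmn
      rcases Nat.eq_or_lt_of_le (Nat.one_le_iff_ne_zero.mpr (Nat.succ_ne_zero m)) with h1 | h1
      · -- m + 1 = 1, base case
        have hm0 : m = 0 := by omega
        subst hm0
        have hn1 : n - 1 < n := by omega
        obtain ⟨A, B, hAB, hs, him⟩ := exact_cover f (hf.mono (hsub _ hn1))
          ((hIV _ hn1) (hcov0 (Set.left_mem_uIcc)))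
          ((hIV _ hn1) (hcov0 (Set.right_mem_uIcc)))
        refine ⟨A, B, hAB, hs, by simpa using him, ?_⟩
        intro s hs1
        have : s = 0 := by omega
        subst this
        simpa using hs
      · -- step
        have hm1 : 1 ≤ m := by omega
        obtain ⟨A, B, hAB, hsV, him, hitin⟩ := ih hm1 (by omega)
        set t := n - (m + 1) with htdef
        have htn : t < n := by omega
        have ht1 : t + 1 = n - m := by omega
        have ht1n : t + 1 < n := by omega
        -- A, B ∈ f '' V t
        have hVsub : V (t+1) ⊆ f '' V t := fun z hz => (hIV t htn) (hcov t ht1n hz)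
        have hA : A ∈ f '' V t := hVsub (ht1 ▸ hsV (Set.left_mem_Icc.mpr hAB))
        have hB : B ∈ f '' V t := hVsub (ht1 ▸ hsV (Set.right_mem_Icc.mpr hAB))
        obtain ⟨A', B', hAB', hs', him'⟩ := exact_cover f (hf.mono (hsub t htn)) hA hB
        rw [Set.uIcc_of_le hAB] at him'
        refine ⟨A', B', hAB', hs', ?_, ?_⟩
        · rw [Function.iterate_succ, Set.image_comp, him', him]
        · intro s hsm
          cases s with
          | zero => simpa using hs'
          | succ s =>
            have hsm' : s < m := by omega
            rw [Function.iterate_succ, Set.image_comp, him']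
            have := hitin s hsm'
            have harith : n - m + s = n - (m+1) + (s+1) := by omega
            rw [harith] at this
            exact this
  obtain ⟨A, B, hAB, hsV, him, hitin⟩ := main n (by omega) le_rfl
  rw [Nat.sub_self] at hsV
  -- fixed point of f^[n] in Icc A B
  set m₀ := min (e₁ 0) (e₂ 0) with hm₀
  set M₀ := max (e₁ 0) (e₂ 0) with hM₀
  have hV0 : V 0 = Icc m₀ M₀ := rfl
  have hcont_iter : ∀ s, s ≤ n → ContinuousOn (f^[s]) (Icc A B) := by
    intro s
    induction s with
    | zero => intro _; simpa using continuousOn_id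
    | succ s ih =>
      intro hsn
      rw [Function.iterate_succ']
      refine ContinuousOn.comp hf (ih (by omega)) ?_
      intro z hz
      have hvs : f^[s] z ∈ V (n - n + s) := hitin s (by omega) (Set.mem_image_of_mem _ hz)
      rw [Nat.sub_self, Nat.zero_add] at hvs
      exact hsub s (by omega) hvs
  obtain ⟨zm, hzm, hfzm⟩ : ∃ zm ∈ Icc A B, f^[n] zm = m₀ := by
    have : m₀ ∈ V 0 := by rw [hV0]; exact Set.left_mem_Icc.mpr min_le_max
    rw [← him] at this; obtain ⟨zm, h1, h2⟩ := this; exact ⟨zm, h1, h2⟩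
  obtain ⟨zM, hzM, hfzM⟩ : ∃ zM ∈ Icc A B, f^[n] zM = M₀ := by
    have : M₀ ∈ V 0 := by rw [hV0]; exact Set.right_mem_Icc.mpr min_le_max
    rw [← him] at this; obtain ⟨zM, h1, h2⟩ := this; exact ⟨zM, h1, h2⟩
  set g : ℝ → ℝ := fun z => f^[n] z - z with hg
  have hgc : ContinuousOn g (Icc A B) := (hcont_iter n le_rfl).sub continuousOn_id
  have hzmV : zm ∈ Icc m₀ M₀ := hV0 ▸ hsV hzm
  have hzMV : zM ∈ Icc m₀ M₀ := hV0 ▸ hsV hzM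
  have hgzm : g zm ≤ 0 := by simp [hg, hfzm]; linarith [hzmV.1]
  have hgzM : 0 ≤ g zM := by simp [hg, hfzM]; linarith [hzMV.2]
  have hsubz : uIcc zm zM ⊆ Icc A B := by
    rw [Set.uIcc]
    exact Icc_subset_Icc (le_min hzm.1 hzM.1) (max_le hzm.2 hzM.2)
  have hIVg := intermediate_value_uIcc (f := g) (a := zm) (b := zM) (hgc.mono hsubz)
  have h0 : (0:ℝ) ∈ uIcc (g zm) (g zM) := by
    rw [Set.mem_uIcc]; left; exact ⟨hgzm, hgzM⟩
  obtain ⟨z, hz, hgz⟩ := hIVg h0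
  have hzAB : z ∈ Icc A B := hsubz hz
  have hfix : f^[n] z = z := by
    have : f^[n] z - z = 0 := hgz
    linarith
  refine ⟨z, ?_, hfix⟩
  intro t htn
  have hvt : f^[t] z ∈ V (n - n + t) := hitin t htn (Set.mem_image_of_mem _ hzAB)
  rw [Nat.sub_self, Nat.zero_add] at hvt
  exact hvt

lemma fix_below (f : ℝ → ℝ) (hcont : ContinuousOn f (Set.Icc 0 1))
    (hmaps : Set.MapsTo f (Set.Icc 0 1) (Set.Icc 0 1))
    (a : ℝ) (ha : a ∈ Set.Icc (0:ℝ) 1)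
    (hauniq : ∀ b ∈ Set.Icc (0:ℝ) 1, f b = b → b = a) :
    ∀ z ∈ Set.Icc (0:ℝ) 1, z < a → z < f z := by
  intro z hz hza
  rcases lt_trichotomy z (f z) with h | h | h
  · exact h
  · exact absurd (hauniq z hz h.symm) (by linarith)
  · exfalso
    set g : ℝ → ℝ := fun t => f t - t with hg
    have hgc : ContinuousOn g (Icc 0 z) := by
      refine ContinuousOn.sub (hcont.mono ?_) continuousOn_id
      exact Icc_subset_Icc le_rfl hz.2
    have hg0 : 0 ≤ g 0 := by
      have := (hmaps (Set.mem_Icc.mpr ⟨le_rfl, zero_le_one⟩)).1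
      simp [hg]
      linarith
    have hgz : g z < 0 := by simp [hg]; linarith
    have h0z : (0:ℝ) ≤ z := hz.1
    have : (0:ℝ) ∈ uIcc (g 0) (g z) := Set.mem_uIcc.mpr (Or.inr ⟨le_of_lt hgz, hg0⟩)
    obtain ⟨c, hc, hgc0⟩ := intermediate_value_uIcc
      (hgc.mono (by rw [Set.uIcc_of_le h0z])) this
    rw [Set.uIcc_of_le h0z] at hc
    have hcfix : f c = c := by
      have : f c - c = 0 := hgc0
      linarith
    have : c = a := hauniq c (Icc_subset_Icc le_rfl hz.2 hc) hcfix
    linarith [hc.2]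

lemma fix_above (f : ℝ → ℝ) (hcont : ContinuousOn f (Set.Icc 0 1))
    (hmaps : Set.MapsTo f (Set.Icc 0 1) (Set.Icc 0 1))
    (a : ℝ) (ha : a ∈ Set.Icc (0:ℝ) 1)
    (hauniq : ∀ b ∈ Set.Icc (0:ℝ) 1, f b = b → b = a) :
    ∀ z ∈ Set.Icc (0:ℝ) 1, a < z → f z < z := by
  intro z hz hza
  rcases lt_trichotomy (f z) z with h | h | h
  · exact h
  · exact absurd (hauniq z hz h) (by linarith)
  · exfalso
    set g : ℝ → ℝ := fun t => f t - t with hg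
    have hgc : ContinuousOn g (Icc z 1) := by
      refine ContinuousOn.sub (hcont.mono ?_) continuousOn_id
      exact Icc_subset_Icc hz.1 le_rfl
    have hg1 : g 1 ≤ 0 := by
      have := (hmaps (Set.mem_Icc.mpr ⟨zero_le_one, le_rfl⟩)).2
      simp [hg]
      linarith
    have hgz : 0 < g z := by simp [hg]; linarith
    have hz1 : z ≤ (1:ℝ) := hz.2
    have : (0:ℝ) ∈ uIcc (g z) (g 1) := Set.mem_uIcc.mpr (Or.inr ⟨hg1, le_of_lt hgz⟩)
    obtain ⟨c, hc, hgc0⟩ := intermediate_value_uIcc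
      (hgc.mono (by rw [Set.uIcc_of_le hz1])) this
    rw [Set.uIcc_of_le hz1] at hc
    have hcfix : f c = c := by
      have : f c - c = 0 := hgc0
      linarith
    have : c = a := hauniq c (Icc_subset_Icc hz.1 le_rfl hc) hcfix
    linarith [hc.1]

lemma telescope (a ρ : ℝ) (w : ℕ → ℝ) (L : ℝ → ℝ)
    (hLrec : ∀ t, L (w (t+1)) = L (w t) + ρ - (if a < w t then 1 else 0)) :
    ∀ s m, L (w (s+m)) = L (w s) + m * ρ -
      ∑ t ∈ Finset.range m, (if a < w (s+t) then (1:ℝ) else 0) := by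
  intro s m
  induction m with
  | zero => simp
  | succ m ih =>
    have : s + (m+1) = (s+m) + 1 := by omega
    rw [this, hLrec (s+m), ih, Finset.sum_range_succ]
    push_cast
    ring

/-- Find a successful admissible pair by the doubling argument. -/
lemma find_success (f : ℝ → ℝ) (a : ℝ)
    (hfixb : ∀ z ∈ Icc (0:ℝ) 1, z < a → z < f z)
    (hfixa : ∀ z ∈ Icc (0:ℝ) 1, a < z → f z < z)
    (w : ℕ → ℝ) (hw01 : ∀ t, w t ∈ Icc (0:ℝ) 1)
    (hwsucc : ∀ t, w (t+1) = f (w t)) (hwa : ∀ t, w t ≠ a)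
    (q : ℕ) (hq0 : 0 < q) (hwq : ∀ t, w (t + q) = w t)
    (ρ : ℝ) (L : ℝ → ℝ)
    (hLrec : ∀ t, L (w (t+1)) = L (w t) + ρ - (if a < w t then 1 else 0))
    (n₀ : ℕ) (h00 : 0 < n₀) (h0q : n₀ < q)
    (hgt0 : GtA a (w n₀) (w 0)) (hL0 : L (w 0) < L (w n₀)) :
    ∃ n, (2 ≤ n ∧ n < q ∧ GtA a (w n) (w 0) ∧ L (w 0) < L (w n)) ∧
      ((∃ s, 1 ≤ s ∧ s < n ∧ ((w s < a ∧ a < w (n+s)) ∨ (w (n+s) < a ∧ a < w s)))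
        ∨ w 0 ∈ Set.uIcc (w n) (w (2*n))) := by
  -- periodicity mod q
  have hwmul : ∀ c t, w (t + q * c) = w t := by
    intro c
    induction c with
    | zero => intro t; simp
    | succ c ih =>
      intro t
      have : t + q * (c+1) = (t + q * c) + q := by ring
      rw [this, hwq, ih]
  have hwmod : ∀ t, w t = w (t % q) := by
    intro t
    conv_lhs => rw [← Nat.mod_add_div t q]
    rw [hwmul]
  -- n = 1 is impossible for admissible pairs
  have hn1imp : ¬ GtA a (w 1) (w 0) := by
    intro hgt
    have hw1 : w 1 = f (w 0) := hwsucc 0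
    rcases hgt with ⟨h1, h2⟩ | ⟨h1, h2⟩
    · exact absurd (hfixb (w 0) (hw01 0) h2) (by rw [← hw1]; linarith)
    · exact absurd (hfixa (w 0) (hw01 0) h1) (by rw [← hw1]; linarith)
  by_contra hno
  push_neg at hno
  -- the doubling step
  have step : ∀ n, 0 < n → n < q → GtA a (w n) (w 0) → L (w 0) < L (w n) →
      (0 < 2*n % q ∧ 2*n % q < q ∧ GtA a (w (2*n % q)) (w 0) ∧
        L (w 0) < L (w (2*n % q))) ∧
      L (w (2*n % q)) - L (w 0) = 2 * (L (w n) - L (w 0)) := by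
    intro n hn0 hnq hgt hLlt
    have hn2 : 2 ≤ n := by
      rcases Nat.lt_or_ge n 2 with h | h
      · exfalso
        have hn1 : n = 1 := by omega
        rw [hn1] at hgt
        exact hn1imp hgt
      · exact h
    have hfail := hno n ⟨hn2, hnq, hgt, hLlt⟩
    obtain ⟨hnocross, hnoinward⟩ := hfail
    -- side matching
    have hmatch : ∀ t, t < n → ((a < w (n+t)) ↔ (a < w t)) := by
      intro t htn
      rcases Nat.eq_zero_or_pos t with rfl | ht1
      · rcases hgt with ⟨h1, h2⟩ | ⟨h1, h2⟩
        · simp only [Nat.add_zero]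
          constructor
          · intro h; linarith
          · intro h; linarith
        · simp only [Nat.add_zero]
          constructor
          · intro _; exact h1
          · intro _; linarith
      · have hnop := hnocross t ht1 htn
        rcases lt_or_gt_of_ne (hwa t) with hb | hb <;>
          rcases lt_or_gt_of_ne (hwa (n+t)) with hb2 | hb2
        · constructor <;> intro h <;> linarith
        · exact absurd (hnop.1 hb) (by linarith)
        · exact absurd (hnop.2 hb2) (by linarith)
        · constructor <;> intro h <;> linarith
    -- code doubling
    have htel1 := telescope a ρ w L hLrec 0 n
    have htel2 := telescope a ρ w L hLrec n n
    simp only [Nat.zero_add] at htel1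
    have hsums : ∑ t ∈ Finset.range n, (if a < w (n+t) then (1:ℝ) else 0) =
        ∑ t ∈ Finset.range n, (if a < w t then (1:ℝ) else 0) := by
      refine Finset.sum_congr rfl (fun t ht => ?_)
      rw [Finset.mem_range] at ht
      rcases hmatch t ht with ⟨hmp, hmpr⟩
      by_cases h : a < w t
      · rw [if_pos h, if_pos (hmpr h)]
      · rw [if_neg h, if_neg (fun hh => h (hmp hh))]
    have hdbl : L (w (n+n)) - L (w 0) = 2 * (L (w n) - L (w 0)) := by
      rw [htel2, hsums, htel1]
      ring
    have hw2n : w (2*n % q) = w (2*n) := by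
      rw [hwmod (2*n)]
    have h2nn : 2*n = n + n := by ring
    -- GtA for the doubled pair
    have hgt2 : GtA a (w (2*n)) (w 0) := by
      rcases hgt with ⟨h1, h2⟩ | ⟨h1, h2⟩
      · left
        refine ⟨?_, h2⟩
        by_contra hcon
        push_neg at hcon
        exact hnoinward (Set.mem_uIcc.mpr (Or.inl ⟨le_of_lt h1, hcon⟩))
      · right
        refine ⟨h1, ?_⟩
        by_contra hcon
        push_neg at hcon
        exact hnoinward (Set.mem_uIcc.mpr (Or.inr ⟨hcon, le_of_lt h2⟩))
    have h2n0 : 0 < 2*n % q := by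
      rcases Nat.eq_zero_or_pos (2*n % q) with h | h
      · exfalso
        have : w (2*n) = w 0 := by rw [← hw2n, h]
        rw [this] at hgt2
        rcases hgt2 with ⟨h1, _⟩ | ⟨_, h1⟩ <;> exact lt_irrefl _ h1
      · exact h
    have hgt2' : GtA a (w (2*n % q)) (w 0) := by rw [hw2n]; exact hgt2
    have hL2 : L (w 0) < L (w (2*n % q)) := by
      rw [hw2n, h2nn]
      linarith
    refine ⟨⟨h2n0, Nat.mod_lt _ hq0, hgt2', hL2⟩, ?_⟩
    rw [hw2n, h2nn]
    exact hdbl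
  -- iterate the doubling
  set F : ℕ → ℕ := fun m => 2*m % q with hF
  set Ns : ℕ → ℕ := fun i => F^[i] n₀ with hNs
  set δ₀ := L (w n₀) - L (w 0) with hδ₀
  have hδ₀pos : 0 < δ₀ := by rw [hδ₀]; linarith
  have hInd : ∀ i, (0 < Ns i ∧ Ns i < q ∧ GtA a (w (Ns i)) (w 0) ∧
      L (w 0) < L (w (Ns i))) ∧ L (w (Ns i)) - L (w 0) = 2^i * δ₀ := by
    intro i
    induction i with
    | zero =>
      refine ⟨⟨h00, h0q, hgt0, hL0⟩, ?_⟩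
      simp [hNs, hδ₀]
    | succ i ih =>
      obtain ⟨⟨ih0, ihq, ihgt, ihL⟩, ihδ⟩ := ih
      have hNsucc : Ns (i+1) = F (Ns i) := by
        rw [hNs]
        exact Function.iterate_succ_apply' F i n₀
      obtain ⟨⟨s0, s1, s2, s3⟩, s4⟩ := step (Ns i) ih0 ihq ihgt ihL
      rw [hF] at hNsucc
      refine ⟨⟨by rw [hNsucc]; exact s0, by rw [hNsucc]; exact s1,
        by rw [hNsucc]; exact s2, by rw [hNsucc]; exact s3⟩, ?_⟩
      rw [hNsucc, s4, ihδ]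
      ring
  -- boundedness contradiction
  have hqne : (Finset.range q).Nonempty := Finset.nonempty_range_iff.mpr (by omega)
  set B := Finset.sup' (Finset.range q) hqne (fun r => L (w r)) with hB
  have hLB : ∀ t, L (w t) ≤ B := by
    intro t
    rw [hwmod t, hB]
    exact Finset.le_sup' (fun r => L (w r)) (Finset.mem_range.mpr (Nat.mod_lt _ hq0))
  obtain ⟨i, hi⟩ := pow_unbounded_of_one_lt ((B - L (w 0))/δ₀) (one_lt_two (α := ℝ))
  have h1 : B - L (w 0) < 2^i * δ₀ := by
    rw [div_lt_iff₀ hδ₀pos] at hi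
    linarith
  have h2 := (hInd i).2
  have h3 := hLB (Ns i)
  linarith

/-- From a successful admissible pair, construct the small cycle. -/
lemma success_construction (f : ℝ → ℝ) (hcont : ContinuousOn f (Icc 0 1))
    (a : ℝ) (ha : a ∈ Icc (0:ℝ) 1) (hfa : f a = a)
    (hauniq : ∀ b ∈ Icc (0:ℝ) 1, f b = b → b = a)
    (hfixb : ∀ z ∈ Icc (0:ℝ) 1, z < a → z < f z)
    (hfixa : ∀ z ∈ Icc (0:ℝ) 1, a < z → f z < z)
    (w : ℕ → ℝ) (hw01 : ∀ t, w t ∈ Icc (0:ℝ) 1)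
    (hwsucc : ∀ t, w (t+1) = f (w t)) (hwa : ∀ t, w t ≠ a)
    (p q n : ℕ) (hq0 : 0 < q) (hn2 : 2 ≤ n) (hnq : n < q)
    (hSq : (∑ t ∈ Finset.range n, if a < w t then (1:ℕ) else 0) * q < n * p)
    (hgt : GtA a (w n) (w 0))
    (hsucc : (∃ s, 1 ≤ s ∧ s < n ∧ ((w s < a ∧ a < w (n+s)) ∨ (w (n+s) < a ∧ a < w s)))
      ∨ w 0 ∈ Set.uIcc (w n) (w (2*n))) :
    ∃ z l k, 2 ≤ k ∧ k < q ∧ z ∈ Icc (0:ℝ) 1 ∧ Function.minimalPeriod f z = k ∧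
      switchCount f z k = 2 * l ∧ l * q < k * p := by
  have hn0 : 0 < n := by omega
  -- the crossing time
  set Cpred : ℕ → Prop := fun s => 1 ≤ s ∧ s < n ∧
    ((w s < a ∧ a < w (n+s)) ∨ (w (n+s) < a ∧ a < w s)) with hCpred
  set s₀ : ℕ := if h : ∃ s, Cpred s then Nat.find h else n with hs₀def
  have hs₀1 : 1 ≤ s₀ := by
    rw [hs₀def]
    split
    · next h => exact (Nat.find_spec h).1
    · omega
  have hs₀n : s₀ ≤ n := by
    rw [hs₀def]
    split
    · next h => exact le_of_lt (Nat.find_spec h).2.1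
    · exact le_refl n
  have hs₀cross : s₀ < n → ((w s₀ < a ∧ a < w (n+s₀)) ∨ (w (n+s₀) < a ∧ a < w s₀)) := by
    intro hlt
    rw [hs₀def] at hlt ⊢
    by_cases h : ∃ s, Cpred s
    · rw [dif_pos h] at hlt ⊢
      exact (Nat.find_spec h).2.2
    · rw [dif_neg h] at hlt; omega
  have hs₀min : ∀ t, 1 ≤ t → t < s₀ →
      ¬((w t < a ∧ a < w (n+t)) ∨ (w (n+t) < a ∧ a < w t)) := by
    intro t ht1 hts
    rw [hs₀def] at hts
    by_cases h : ∃ s, Cpred s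
    · rw [dif_pos h] at hts
      have := Nat.find_min h hts
      rw [hCpred] at this
      intro hop
      have hsn := (Nat.find_spec h).2.1
      exact this ⟨ht1, by omega, hop⟩
    · intro hop
      exact h ⟨t, ht1, by rw [dif_neg h] at hts; omega, hop⟩
  have hs₀inward : s₀ = n → w 0 ∈ Set.uIcc (w n) (w (2*n)) := by
    intro hs
    rcases hsucc with hc | hi
    · exfalso
      have h : ∃ s, Cpred s := hc
      rw [hs₀def, dif_pos h] at hs
      have := (Nat.find_spec h).2.1
      omega
    · exact hi
  -- same side before the crossing
  have hside : ∀ t, t < s₀ → ((w t < a ∧ w (n+t) < a) ∨ (a < w t ∧ a < w (n+t))) := by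
    intro t hts
    rcases Nat.eq_zero_or_pos t with rfl | ht1
    · rcases hgt with ⟨h1, h2⟩ | ⟨h1, h2⟩
      · exact Or.inl ⟨h2, by simpa using lt_trans h1 h2⟩
      · exact Or.inr ⟨h1, by simpa using lt_trans h1 h2⟩
    · have hnop := hs₀min t ht1 hts
      rcases lt_or_gt_of_ne (hwa t) with hb | hb
      · rcases lt_or_gt_of_ne (hwa (n+t)) with hb2 | hb2
        · exact Or.inl ⟨hb, hb2⟩
        · exact absurd (show (w t < a ∧ a < w (n+t)) ∨ (w (n+t) < a ∧ a < w t) from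
            Or.inl ⟨hb, hb2⟩) hnop
      · rcases lt_or_gt_of_ne (hwa (n+t)) with hb2 | hb2
        · exact absurd (show (w t < a ∧ a < w (n+t)) ∨ (w (n+t) < a ∧ a < w t) from
            Or.inr ⟨hb2, hb⟩) hnop
        · exact Or.inr ⟨hb, hb2⟩
  -- the loop intervals
  set e₁ : ℕ → ℝ := fun t => w t with he₁
  set e₂ : ℕ → ℝ := fun t => if t < s₀ then w (n+t) else a with he₂
  have huseg : ∀ u v : ℝ, u ∈ Icc (0:ℝ) 1 → v ∈ Icc (0:ℝ) 1 → uIcc u v ⊆ Icc 0 1 := by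
    intro u v hu hv
    rw [Set.uIcc]
    exact Icc_subset_Icc (le_min hu.1 hv.1) (max_le hu.2 hv.2)
  have hsub : ∀ t < n, uIcc (e₁ t) (e₂ t) ⊆ Icc (0:ℝ) 1 := by
    intro t _
    rw [he₁, he₂]
    dsimp only
    split
    · exact huseg _ _ (hw01 t) (hw01 (n+t))
    · exact huseg _ _ (hw01 t) ha
  have hcov : ∀ t, t + 1 < n → uIcc (e₁ (t+1)) (e₂ (t+1)) ⊆ uIcc (f (e₁ t)) (f (e₂ t)) := by
    intro t htn
    rw [he₁, he₂]
    dsimp only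
    rcases lt_trichotomy (t+1) s₀ with h | h | h
    · rw [if_pos h, if_pos (by omega)]
      rw [← hwsucc t, ← hwsucc (n+t)]
      have : n + (t+1) = (n+t) + 1 := by omega
      rw [this]
    · rw [if_neg (by omega), if_pos (by omega)]
      rw [← hwsucc t, ← hwsucc (n+t)]
      have hcr := hs₀cross (by omega)
      rw [← h] at hcr
      have harith : (n+t) + 1 = n + (t+1) := by omega
      have ha_mem : a ∈ uIcc (w (t+1)) (w ((n+t)+1)) := by
        rw [harith, Set.mem_uIcc]
        rcases hcr with ⟨h1, h2⟩ | ⟨h1, h2⟩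
        · left; exact ⟨le_of_lt h1, le_of_lt h2⟩
        · right; exact ⟨le_of_lt h1, le_of_lt h2⟩
      exact Set.uIcc_subset_uIcc Set.left_mem_uIcc ha_mem
    · rw [if_neg (by omega), if_neg (by omega)]
      rw [← hwsucc t, hfa]
  have hcov0 : uIcc (e₁ 0) (e₂ 0) ⊆ uIcc (f (e₁ (n-1))) (f (e₂ (n-1))) := by
    have hV0 : uIcc (e₁ 0) (e₂ 0) = uIcc (w 0) (w n) := by
      rw [he₁, he₂]
      dsimp only
      rw [if_pos (by omega : 0 < s₀)]
      norm_num
    rw [hV0, he₁, he₂]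
    dsimp only
    have hn1 : n - 1 + 1 = n := by omega
    rcases Nat.lt_or_ge (n-1) s₀ with h | h
    · -- s₀ = n : inward case
      have hs₀eq : s₀ = n := by omega
      rw [if_pos h, ← hwsucc (n-1), ← hwsucc (n + (n-1)), hn1]
      have harith : n + (n-1) + 1 = 2*n := by omega
      rw [harith]
      have hinw := hs₀inward hs₀eq
      exact Set.uIcc_subset_uIcc hinw Set.left_mem_uIcc
    · rw [if_neg (by omega), ← hwsucc (n-1), hn1, hfa]
      -- uIcc (w 0) (w n) ⊆ uIcc (w n) a  since  w 0 between w n and a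
      have h0mem : w 0 ∈ uIcc (w n) a := by
        rw [Set.mem_uIcc]
        rcases hgt with ⟨h1, h2⟩ | ⟨h1, h2⟩
        · left; exact ⟨le_of_lt h1, le_of_lt h2⟩
        · right; exact ⟨le_of_lt h1, le_of_lt h2⟩
      exact Set.uIcc_subset_uIcc h0mem Set.left_mem_uIcc
  obtain ⟨z, hitin, hfixn⟩ := loop_periodic_point f hcont n hn0 e₁ e₂ hsub hcov hcov0
  have hz01 : z ∈ Icc (0:ℝ) 1 := by
    have := hitin 0 hn0
    simpa using hsub 0 hn0 (by simpa using this)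
  -- periodicity of the orbit of z
  have hper : Function.IsPeriodicPt f n z := hfixn
  have hmulper : ∀ c : ℕ, f^[n*c] z = z := fun c => (hper.mul_const c)
  have hmod : ∀ t, f^[t] z = f^[t % n] z := by
    intro t
    conv_lhs => rw [← Nat.mod_add_div t n]
    rw [Function.iterate_add_apply, hmulper]
  have hit01 : ∀ t, f^[t] z ∈ Icc (0:ℝ) 1 := by
    intro t
    rw [hmod]
    have hlt : t % n < n := Nat.mod_lt _ hn0
    exact hsub _ hlt (hitin _ hlt)
  have hza : a ∉ uIcc (e₁ 0) (e₂ 0) := by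
    have hV0 : uIcc (e₁ 0) (e₂ 0) = uIcc (w 0) (w n) := by
      rw [he₁, he₂]; dsimp only; rw [if_pos (by omega : 0 < s₀)]; norm_num
    rw [hV0, Set.mem_uIcc]
    rintro (⟨h1, h2⟩ | ⟨h1, h2⟩) <;>
      rcases hgt with ⟨g1, g2⟩ | ⟨g1, g2⟩ <;> linarith
  have hfza : ∀ t, f^[t] z ≠ a := by
    intro t heq
    have hz_a : z = a := by
      obtain ⟨c, hc⟩ : ∃ c, t ≤ n * c := ⟨t, Nat.le_mul_of_pos_left t hn0⟩
      have : f^[n*c] z = f^[n*c - t] (f^[t] z) := by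
        rw [← Function.iterate_add_apply]
        congr 1
        omega
      rw [hmulper, heq, Function.iterate_fixed hfa] at this
      exact this
    apply hza
    rw [← hz_a]
    simpa using hitin 0 hn0
  -- side of the orbit of z matches w
  have hsidez : ∀ t < n, (a < f^[t] z ↔ a < w t) := by
    intro t htn
    have hmem := hitin t htn
    rw [he₁, he₂] at hmem
    dsimp only at hmem
    rcases Nat.lt_or_ge t s₀ with h | h
    · rw [if_pos h] at hmem
      rcases hside t h with ⟨h1, h2⟩ | ⟨h1, h2⟩
      · constructor
        · intro hlt
          exfalso
          rw [Set.mem_uIcc] at hmem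
          rcases hmem with ⟨m1, m2⟩ | ⟨m1, m2⟩ <;> linarith
        · intro hlt; linarith
      · constructor
        · intro _; exact h1
        · intro _
          rw [Set.mem_uIcc] at hmem
          rcases hmem with ⟨m1, m2⟩ | ⟨m1, m2⟩ <;> linarith
    · rw [if_neg (by omega)] at hmem
      rw [Set.mem_uIcc] at hmem
      have hne := hfza t
      rcases lt_or_gt_of_ne (hwa t) with hb | hb
      · constructor
        · intro hlt
          exfalso
          rcases hmem with ⟨m1, m2⟩ | ⟨m1, m2⟩ <;> linarith
        · intro hlt; linarith
      · constructor
        · intro _; exact hb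
        · intro _
          rcases hmem with ⟨m1, m2⟩ | ⟨m1, m2⟩ <;>
            rcases lt_or_gt_of_ne hne with c1 | c1 <;> linarith
  -- minimal period
  set k := Function.minimalPeriod f z with hkdef
  have hkdvd : k ∣ n := Function.IsPeriodicPt.minimalPeriod_dvd hper
  have hk0 : 0 < k := Function.IsPeriodicPt.minimalPeriod_pos hn0 hper
  have hfk : f^[k] z = z := Function.isPeriodicPt_minimalPeriod f z
  have hk1 : k ≠ 1 := by
    intro h
    have hfz : f z = z := by
      have := hfk
      rw [h] at this
      simpa using this
    have : z = a := hauniq z hz01 hfz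
    exact hfza 0 (by simpa using this)
  have hk2 : 2 ≤ k := by omega
  have hkn : k ≤ n := Nat.le_of_dvd hn0 hkdvd
  have hkq : k < q := lt_of_le_of_lt hkn hnq
  -- displacement signs
  have hdpos : ∀ t, f^[t] z < a → f^[t] z < f^[t+1] z := by
    intro t hlt
    rw [Function.iterate_succ_apply']
    exact hfixb _ (hit01 t) hlt
  have hdneg : ∀ t, a < f^[t] z → f^[t+1] z < f^[t] z := by
    intro t hlt
    rw [Function.iterate_succ_apply']
    exact hfixa _ (hit01 t) hlt
  -- the switch condition in terms of sides
  have hcond : ∀ t, ((f^[t+1] z - f^[t] z) * (f^[t+2] z - f^[t+1] z) < 0 ↔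
      ¬((a < f^[t] z) ↔ (a < f^[t+1] z))) := by
    intro t
    rcases lt_or_gt_of_ne (hfza t) with h1 | h1 <;>
      rcases lt_or_gt_of_ne (hfza (t+1)) with h2 | h2
    · have d1 := hdpos t h1
      have d2 := hdpos (t+1) h2
      constructor
      · intro hlt; nlinarith
      · intro hiff; exact absurd (by constructor <;> intro <;> linarith) hiff
    · have d1 := hdpos t h1
      have d2 := hdneg (t+1) h2
      constructor
      · intro _; intro hiff; exact absurd (hiff.mpr h2) (by linarith)
      · intro _; nlinarith
    · have d1 := hdneg t h1
      have d2 := hdpos (t+1) h2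
      constructor
      · intro _; intro hiff; exact absurd (hiff.mp h1) (by linarith)
      · intro _; nlinarith
    · have d1 := hdneg t h1
      have d2 := hdneg (t+1) h2
      constructor
      · intro hlt; nlinarith
      · intro hiff; exact absurd (by constructor <;> intro <;> linarith) hiff
  -- switchCount as a filtered card
  set cN : ℕ → ℕ := fun t => if a < f^[t] z then 1 else 0 with hcN
  set C := (Finset.filter (fun t => ¬((a < f^[t] z) ↔ (a < f^[t+1] z)))
    (Finset.range k)).card with hCdef
  have hswitch : switchCount f z k = C := by
    rw [switchCount, hCdef]
    rw [← Set.ncard_coe_finset]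
    congr 1
    ext t
    simp only [Finset.coe_filter, Finset.mem_range, Set.mem_setOf_eq]
    constructor
    · rintro ⟨h1, h2⟩; exact ⟨h1, (hcond t).mp h2⟩
    · rintro ⟨h1, h2⟩; exact ⟨h1, (hcond t).mpr h2⟩
  -- periodicity of cN
  have hcNk : ∀ t, cN (t + k) = cN t := by
    intro t
    rw [hcN]
    dsimp only
    rw [Function.iterate_add_apply, hfk]
  have hcNmul : ∀ c t, cN (t + k * c) = cN t := by
    intro c
    induction c with
    | zero => intro t; simp
    | succ c ih =>
      intro t
      have : t + k * (c+1) = (t + k * c) + k := by ring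
      rw [this, hcNk, ih]
  set Tk := ∑ t ∈ Finset.range k, cN t with hTk
  have hcNk0 : cN k = cN 0 := by simpa using hcNk 0
  have hshift : ∑ t ∈ Finset.range k, cN (t+1) = Tk := by
    have e1 := Finset.sum_range_succ' cN k
    have e2 := Finset.sum_range_succ cN k
    rw [hcNk0] at e2
    omega
  set g : ℕ → ℕ := fun t => if ¬((a < f^[t] z) ↔ (a < f^[t+1] z)) then 1 else 0 with hgdef
  have hCsum : C = ∑ t ∈ Finset.range k, g t := Finset.card_filter _ _
  have hgboth : ∀ t, g t ≤ cN t + cN (t+1) ∧ g t % 2 = (cN t + cN (t+1)) % 2 := by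
    intro t
    rw [hgdef, hcN]
    dsimp only
    by_cases h1 : a < f^[t] z <;> by_cases h2 : a < f^[t+1] z
    · rw [if_neg (not_not_intro (iff_of_true h1 h2)), if_pos h1, if_pos h2]
      norm_num
    · rw [if_pos (fun hiff => h2 ((Iff.mp hiff) h1)), if_pos h1, if_neg h2]
      norm_num
    · rw [if_pos (fun hiff => h1 ((Iff.mpr hiff) h2)), if_neg h1, if_pos h2]
      norm_num
    · rw [if_neg (not_not_intro (iff_of_false h1 h2)), if_neg h1, if_neg h2]
      norm_num
  have hgle : ∀ t, g t ≤ cN t + cN (t+1) := fun t => (hgboth t).1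
  have hgmod : ∀ t, g t % 2 = (cN t + cN (t+1)) % 2 := fun t => (hgboth t).2
  have hCle : C ≤ Tk + Tk := by
    rw [hCsum]
    calc ∑ t ∈ Finset.range k, g t ≤ ∑ t ∈ Finset.range k, (cN t + cN (t+1)) :=
          Finset.sum_le_sum (fun t _ => hgle t)
      _ = Tk + Tk := by rw [Finset.sum_add_distrib, hshift]
  have hCpar : C % 2 = 0 := by
    rw [hCsum]
    calc (∑ t ∈ Finset.range k, g t) % 2 = (∑ t ∈ Finset.range k, g t % 2) % 2 :=
          Finset.sum_nat_mod _ _ _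
      _ = (∑ t ∈ Finset.range k, (cN t + cN (t+1)) % 2) % 2 := by
          congr 1
          exact Finset.sum_congr rfl (fun t _ => hgmod t)
      _ = (∑ t ∈ Finset.range k, (cN t + cN (t+1))) % 2 := (Finset.sum_nat_mod _ _ _).symm
      _ = (Tk + Tk) % 2 := by rw [Finset.sum_add_distrib, hshift]
      _ = 0 := by omega
  set l := C / 2 with hldef
  have hlC : 2 * l = C := by omega
  -- sums over n
  have hTn : (∑ t ∈ Finset.range n, if a < w t then (1:ℕ) else 0) =
      ∑ t ∈ Finset.range n, cN t := by
    refine Finset.sum_congr rfl (fun t ht => ?_)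
    rw [Finset.mem_range] at ht
    rw [hcN]
    dsimp only
    rcases hsidez t ht with ⟨hmp, hmpr⟩
    by_cases h : a < w t
    · rw [if_pos h, if_pos (hmpr h)]
    · rw [if_neg h, if_neg (fun hh => h (hmp hh))]
  have hrep : ∀ c, ∑ t ∈ Finset.range (c * k), cN t = c * Tk := by
    intro c
    induction c with
    | zero => simp
    | succ c ih =>
      have : (c+1) * k = c * k + k := by ring
      rw [this, Finset.sum_range_add, ih]
      have : ∑ i ∈ Finset.range k, cN (c * k + i) = Tk := by
        refine Finset.sum_congr rfl (fun i _ => ?_)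
        have : c * k + i = i + k * c := by ring
        rw [this, hcNmul]
      rw [this]
      ring
  have hnkk : (n / k) * k = n := Nat.div_mul_cancel hkdvd
  have hTnTk : ∑ t ∈ Finset.range n, cN t = (n / k) * Tk := by
    conv_lhs => rw [← hnkk]
    exact hrep (n / k)
  have hdiv0 : 0 < n / k := Nat.div_pos hkn hk0
  have hTkq : Tk * q < k * p := by
    rw [hTn, hTnTk] at hSq
    have h1 : (n / k) * (Tk * q) < (n / k) * (k * p) := by
      calc (n / k) * (Tk * q) = ((n / k) * Tk) * q := by ring
        _ < n * p := hSq
        _ = (n / k) * (k * p) := by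
            conv_lhs => rw [← hnkk]
            ring
    exact Nat.lt_of_mul_lt_mul_left h1
  have hfinal : l * q < k * p := by
    have e1 : C * q ≤ (Tk + Tk) * q := Nat.mul_le_mul_right q hCle
    have e2 : (2 * l) * q = 2 * (l * q) := by ring
    have e3 : (Tk + Tk) * q = 2 * (Tk * q) := by ring
    rw [hlC] at e2
    omega
  refine ⟨z, l, k, hk2, hkq, hz01, rfl, ?_, hfinal⟩
  rw [hswitch, hlC]

/-- If the code `L` of a cycle `P` of over-rotation pair `(p,q)` of a continuous map
`f : [0,1] → [0,1]` with unique fixed point `a` fails to be non-increasing w.r.t. `>_a`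
(there are `x, y ∈ P` with `x >_a y` and `L x > L y`), then `f` has a cycle of minimal
period `k < q` and over-rotation number `l/k < p/q`, and the over-rotation interval of
`f` contains `[l/k, 1/2]`. -/
theorem code_increase_gives_smaller_cycle (f : ℝ → ℝ)
    (hcont : ContinuousOn f (Set.Icc 0 1))
    (hmaps : Set.MapsTo f (Set.Icc 0 1) (Set.Icc 0 1))
    (a : ℝ) (ha : a ∈ Set.Icc (0:ℝ) 1) (hfa : f a = a)
    (hauniq : ∀ b ∈ Set.Icc (0:ℝ) 1, f b = b → b = a)
    (x₀ : ℝ) (p q : ℕ) (hcyc : IsCycleIn f (Set.Icc 0 1) x₀ p q)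
    (L : ℝ → ℝ) (hL : IsCode f a (orbitSet f x₀) ((p : ℝ) / (q : ℝ)) L)
    (x y : ℝ) (hx : x ∈ orbitSet f x₀) (hy : y ∈ orbitSet f x₀)
    (hgt : GtA a x y) (hLgt : L y < L x) :
    ∃ (y' : ℝ) (l k : ℕ), 2 ≤ k ∧ k < q ∧ IsCycleIn f (Set.Icc 0 1) y' l k ∧
      (l : ℝ) / (k : ℝ) < (p : ℝ) / (q : ℝ) ∧
      Set.Icc ((l : ℝ) / (k : ℝ)) (1/2) ⊆
        Set.Icc (sInf (orNumsIn f (Set.Icc 0 1))) (1/2) := by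
  obtain ⟨hx01, hq2, hqmin, hswq⟩ := hcyc
  have hq0 : 0 < q := by omega
  have hfixb := fix_below f hcont hmaps a ha hauniq
  have hfixa := fix_above f hcont hmaps a ha hauniq
  -- the orbit of y
  rw [orbitSet, Set.mem_range] at hx hy
  obtain ⟨j, hj⟩ := hy
  obtain ⟨i, hi⟩ := hx
  set w : ℕ → ℝ := fun t => f^[t] y with hwdef
  have hw0 : w 0 = y := rfl
  have hwsucc : ∀ t, w (t+1) = f (w t) := fun t => Function.iterate_succ_apply' f t y
  have hwx₀ : ∀ t, w t = f^[t + j] x₀ := by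
    intro t
    rw [hwdef]
    dsimp only
    rw [Function.iterate_add_apply, hj]
  have horb : ∀ t : ℕ, f^[t] x₀ ∈ Set.Icc (0:ℝ) 1 := by
    intro t
    induction t with
    | zero => simpa using hx01
    | succ t ih =>
      rw [Function.iterate_succ_apply']
      exact hmaps ih
  have hw01 : ∀ t, w t ∈ Set.Icc (0:ℝ) 1 := fun t => (hwx₀ t) ▸ horb (t + j)
  have hwmem : ∀ t, w t ∈ orbitSet f x₀ := by
    intro t
    rw [orbitSet, Set.mem_range]
    exact ⟨t + j, (hwx₀ t).symm⟩
  -- periodicity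
  have hqper : f^[q] x₀ = x₀ := by
    rw [← hqmin]
    exact Function.iterate_minimalPeriod
  have hqmul : ∀ c, f^[q * c] x₀ = x₀ := by
    intro c
    induction c with
    | zero => simp
    | succ c ih =>
      rw [Nat.mul_succ, Function.iterate_add_apply, hqper, ih]
  have hyq : f^[q] y = y := by
    rw [← hj, ← Function.iterate_add_apply, Nat.add_comm, Function.iterate_add_apply, hqper]
  have hwq : ∀ t, w (t + q) = w t := by
    intro t
    rw [hwdef]
    dsimp only
    rw [Function.iterate_add_apply, hyq]
  have hwmulq : ∀ c t, w (t + q * c) = w t := by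
    intro c
    induction c with
    | zero => intro t; simp
    | succ c ih =>
      intro t
      have : t + q * (c+1) = (t + q * c) + q := by ring
      rw [this, hwq, ih]
  have hwmod : ∀ t, w t = w (t % q) := by
    intro t
    conv_lhs => rw [← Nat.mod_add_div t q]
    rw [hwmulq]
  have hwadd : ∀ s t, w (t + s) = f^[s] (w t) := by
    intro s t
    rw [hwdef]
    dsimp only
    rw [Nat.add_comm, Function.iterate_add_apply]
  -- a is not on the orbit
  have hya : y ≠ a := by
    intro h
    rcases hgt with ⟨_, h2⟩ | ⟨h1, _⟩ <;> rw [h] at * <;> linarith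
  have hwa : ∀ t, w t ≠ a := by
    intro t heq
    apply hya
    have hy_eq : y = w (t + (q * (t / q + 1) - t)) := by
      have harith : t + (q * (t / q + 1) - t) = 0 + q * (t / q + 1) := by
        have : t ≤ q * (t / q + 1) := by
          have := Nat.mod_add_div t q
          have := Nat.mod_lt t hq0
          nlinarith [Nat.mod_add_div t q]
        omega
      rw [harith, hwmulq, hw0]
    rw [hy_eq, hwadd, heq, Function.iterate_fixed hfa]
  -- code recursion along the orbit
  set ρ : ℝ := (p : ℝ) / q with hρ
  have hLrec : ∀ t, L (w (t+1)) = L (w t) + ρ - (if a < w t then 1 else 0) := by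
    intro t
    rw [hwsucc t, hL.2 (w t) (hwmem t)]
    rfl
  -- the initial admissible index
  have hx_w : x = w ((i + (q - j % q)) % q) := by
    rw [← hwmod]
    rw [hwx₀]
    have harith : i + (q - j % q) + j = i + q * (1 + j / q) := by
      have h2 : j % q < q := Nat.mod_lt j hq0
      have hdm := Nat.div_add_mod j q
      have hmul : q * (1 + j / q) = q + q * (j / q) := by ring
      rw [hmul]
      generalize q * (j / q) = m at hdm ⊢
      omega
    rw [harith, Function.iterate_add_apply, hqmul, hi]
  set n₀ := (i + (q - j % q)) % q with hn₀
  have hn₀q : n₀ < q := Nat.mod_lt _ hq0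
  have hn₀0 : 0 < n₀ := by
    rcases Nat.eq_zero_or_pos n₀ with h | h
    · exfalso
      rw [h, hw0] at hx_w
      rw [hx_w] at hgt
      rcases hgt with ⟨h1, _⟩ | ⟨_, h1⟩ <;> exact lt_irrefl _ h1
    · exact h
  have hgt0 : GtA a (w n₀) (w 0) := by rw [hw0, ← hx_w]; exact hgt
  have hL0 : L (w 0) < L (w n₀) := by rw [hw0, ← hx_w]; exact hLgt
  -- find a successful pair
  obtain ⟨n, ⟨hn2, hnq, hgtn, hLn⟩, hsucc⟩ :=
    find_success f a hfixb hfixa w hw01 hwsucc hwa q hq0 hwq ρ L hLrec n₀ hn₀0 hn₀q hgt0 hL0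
  -- convert the code inequality to the counting inequality
  have htel := telescope a ρ w L hLrec 0 n
  simp only [Nat.zero_add] at htel
  set SN : ℕ := ∑ t ∈ Finset.range n, if a < w t then (1:ℕ) else 0 with hSN
  have hcast : (SN : ℝ) = ∑ t ∈ Finset.range n, (if a < w t then (1:ℝ) else 0) := by
    rw [hSN, Nat.cast_sum]
    exact Finset.sum_congr rfl (fun t _ => by split <;> simp)
  have hq0R : (0:ℝ) < q := by exact_mod_cast hq0
  have hSq : SN * q < n * p := by
    have h5 : (SN : ℝ) < n * ρ := by
      rw [hcast]
      linarith [htel, hLn]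
    have h6 : (SN : ℝ) * q < n * p := by
      rw [hρ] at h5
      calc (SN : ℝ) * q < (n * ((p:ℝ)/q)) * q := by
            exact mul_lt_mul_of_pos_right h5 hq0R
        _ = n * p := by field_simp
    exact_mod_cast h6
  -- construct the small cycle
  obtain ⟨z, l, k, hk2, hkq, hz01, hmin, hswc, hlq⟩ :=
    success_construction f hcont a ha hfa hauniq hfixb hfixa w hw01 hwsucc hwa
      p q n hq0 hn2 hnq hSq hgtn hsucc
  have hk0R : (0:ℝ) < k := by
    have : 0 < k := by omega
    exact_mod_cast this
  have hcycle : IsCycleIn f (Set.Icc 0 1) z l k := ⟨hz01, hk2, hmin, hswc⟩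
  have hratio : (l : ℝ) / k < (p : ℝ) / q := by
    rw [div_lt_div_iff₀ hk0R hq0R]
    have : l * q < p * k := by rw [Nat.mul_comm p k]; exact hlq
    exact_mod_cast this
  refine ⟨z, l, k, hk2, hkq, hcycle, hratio, ?_⟩
  have hmem : (l : ℝ) / k ∈ orNumsIn f (Set.Icc 0 1) := ⟨z, l, k, hcycle, rfl⟩
  have hbdd : BddBelow (orNumsIn f (Set.Icc 0 1)) := by
    refine ⟨0, ?_⟩
    rintro r ⟨x', p', q', _, rfl⟩
    positivity
  intro r hr
  exact ⟨le_trans (csInf_le hbdd hmem) hr.1, hr.2⟩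


end OverRotation
end

section
/- Let f : [0,1] → [0,1] be a continuous map with a unique fixed point a, and let P be a cycle of f with over-rotation pair (p, q) and code L. If there exist distinct u, v ∈ P with u >_a v and L(u) = L(v), then p and q are not coprime, i.e., gcd(p, q) > 1. -/
open Set Function
open scoped Classical

namespace OverRotation

/-- If the code of a cycle `P` of over-rotation pair `(p,q)` takes equal values at two
distinct points `u >_a v` of `P`, then `p` and `q` are not coprime. -/
theorem equal_codes_imply_noncoprime (f : ℝ → ℝ)
    (hcont : ContinuousOn f (Set.Icc 0 1))
    (hmaps : Set.MapsTo f (Set.Icc 0 1) (Set.Icc 0 1))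
    (a : ℝ) (ha : a ∈ Set.Icc (0:ℝ) 1) (hfa : f a = a)
    (hauniq : ∀ b ∈ Set.Icc (0:ℝ) 1, f b = b → b = a)
    (x₀ : ℝ) (p q : ℕ) (hcyc : IsCycleIn f (Set.Icc 0 1) x₀ p q)
    (L : ℝ → ℝ) (hL : IsCode f a (orbitSet f x₀) ((p : ℝ) / (q : ℝ)) L)
    (u v : ℝ) (hu : u ∈ orbitSet f x₀) (hv : v ∈ orbitSet f x₀) (huv : u ≠ v)
    (hgt : GtA a u v) (hLeq : L u = L v) :
    1 < Nat.gcd p q := by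
  by_contra hg
  push_neg at hg
  obtain ⟨-, hq2, hper, -⟩ := hcyc
  have hq0 : q ≠ 0 := by omega
  have hgcd : Nat.gcd p q = 1 := by
    have h0 : Nat.gcd p q ≠ 0 := fun h => hq0 (Nat.eq_zero_of_gcd_eq_zero_right h)
    omega
  set ρ : ℝ := (p : ℝ) / (q : ℝ) with hρ
  have mem : ∀ k : ℕ, f^[k] x₀ ∈ orbitSet f x₀ := fun k => ⟨k, rfl⟩
  have step : ∀ k : ℕ, L (f^[k+1] x₀) = L (f^[k] x₀) + ρ - phiA a (f^[k] x₀) := by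
    intro k
    rw [Function.iterate_succ_apply']
    exact hL.2 (f^[k] x₀) (mem k)
  set c : ℕ → ℤ := fun k =>
    (Finset.range k).sum (fun i => if a < f^[i] x₀ then 1 else 0) with hc
  have key : ∀ k : ℕ, L (f^[k] x₀) = L x₀ + k * ρ - (c k : ℝ) := by
    intro k
    induction k with
    | zero => simp [hc]
    | succ n ih =>
      have hcs : (c (n+1) : ℝ) = (c n : ℝ) + phiA a (f^[n] x₀) := by
        simp only [hc, Finset.sum_range_succ, phiA]
        push_cast
        split <;> simp
      rw [step n, ih, hcs]
      push_cast
      ring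
  obtain ⟨j, hj⟩ := hu
  obtain ⟨k, hk⟩ := hv
  simp only at hj hk
  have hLjk : L (f^[j] x₀) = L (f^[k] x₀) := by rw [hj, hk, hLeq]
  have hq0' : (q : ℝ) ≠ 0 := Nat.cast_ne_zero.mpr hq0
  have hreal : ((j : ℝ) - k) * p = ((c j : ℝ) - (c k : ℝ)) * q := by
    have h1 := key j
    have h2 := key k
    rw [h1, h2] at hLjk
    have h3 : (j : ℝ) * ρ - c j = (k : ℝ) * ρ - c k := by linarith
    rw [hρ] at h3
    field_simp at h3
    linarith
  have hint : ((j : ℤ) - k) * p = ((c j) - c k) * q := by exact_mod_cast hreal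
  have hdvd : (q : ℤ) ∣ ((j : ℤ) - k) * p := ⟨(c j) - c k, by linarith [hint]⟩
  have hcop : IsCoprime (q : ℤ) (p : ℤ) := by
    rw [Int.isCoprime_iff_gcd_eq_one]
    simpa [Int.gcd, Nat.gcd_comm] using hgcd
  have hdvd2 : (q : ℤ) ∣ ((j : ℤ) - k) := hcop.dvd_of_dvd_mul_right hdvd
  have hm : (j : ℤ) % q = (k : ℤ) % q :=
    Int.modEq_iff_dvd.mpr (by simpa using dvd_neg.mpr hdvd2)
  have hmod : j % q = k % q := by
    have : ((j % q : ℕ) : ℤ) = ((k % q : ℕ) : ℤ) := by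
      push_cast
      exact hm
    exact_mod_cast this
  have hiter : f^[j] x₀ = f^[k] x₀ := by
    rw [← Function.iterate_mod_minimalPeriod_eq (n := j),
      ← Function.iterate_mod_minimalPeriod_eq (n := k), hper, hmod]
  exact huv (by rw [← hj, ← hk, hiter])

end OverRotation
end

section
/- Let f be a continuous map of a compact real interval into itself with a unique fixed point a, and let P be the orbit of a periodic point x of minimal period q ≥ 2. Then the number of indices 0 ≤ i < q such that f^{i+1}(x) − f^{i}(x) and f^{i+2}(x) − f^{i+1}(x) have different signs is even and positive, and it equals twice the number of points y ∈ P with y > a and f(y) < a. -/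
open Set Function
open scoped Classical

namespace OverRotation

private lemma crossing_aux (a : ℝ) (X : ℕ → ℝ) (q : ℕ) (hq1 : 1 ≤ q)
    (hper : X q = X 0) (hne : ∀ i, X i ≠ a)
    (key : ∀ i, a < X i ↔ X (i+1) < X i)
    (key2 : ∀ i, X i < a ↔ X i < X (i+1)) :
    {i : ℕ | i < q ∧ (X (i+1) - X i) * (X (i+2) - X (i+1)) < 0}.ncard =
      ((Finset.range q).filter (fun i => X i < a ∧ a < X (i+1))).card +
      ((Finset.range q).filter (fun i => a < X i ∧ X (i+1) < a)).card ∧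
    ((Finset.range q).filter (fun i => X i < a ∧ a < X (i+1))).card =
      ((Finset.range q).filter (fun i => a < X i ∧ X (i+1) < a)).card ∧
    0 < ((Finset.range q).filter (fun i => a < X i ∧ X (i+1) < a)).card := by
  classical
  have htri : ∀ i, ¬ a < X i → X i < a := fun i h => lt_of_le_of_ne (not_lt.1 h) (hne i)
  have hswitch : ∀ i, ((X (i+1) - X i) * (X (i+2) - X (i+1)) < 0) ↔
      ((X i < a ∧ a < X (i+1)) ∨ (a < X i ∧ X (i+1) < a)) := by
    intro i
    rw [mul_neg_iff]
    constructor
    · rintro (⟨h1, h2⟩ | ⟨h1, h2⟩)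
      · exact Or.inl ⟨(key2 i).2 (sub_pos.1 h1), (key (i+1)).2 (sub_neg.1 h2)⟩
      · exact Or.inr ⟨(key i).2 (sub_neg.1 h1), (key2 (i+1)).2 (sub_pos.1 h2)⟩
    · rintro (⟨h1, h2⟩ | ⟨h1, h2⟩)
      · exact Or.inl ⟨sub_pos.2 ((key2 i).1 h1), sub_neg.2 ((key (i+1)).1 h2)⟩
      · exact Or.inr ⟨sub_neg.2 ((key i).1 h1), sub_pos.2 ((key2 (i+1)).1 h2)⟩
  have hdisj : Disjoint ((Finset.range q).filter (fun i => X i < a ∧ a < X (i+1)))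
      ((Finset.range q).filter (fun i => a < X i ∧ X (i+1) < a)) := by
    rw [Finset.disjoint_left]
    intro i hi hi'
    simp only [Finset.mem_filter] at hi hi'
    exact absurd hi'.2.1 (lt_asymm hi.2.1)
  have hsetcard : {i : ℕ | i < q ∧ (X (i+1) - X i) * (X (i+2) - X (i+1)) < 0}.ncard =
      ((Finset.range q).filter (fun i => X i < a ∧ a < X (i+1))).card +
      ((Finset.range q).filter (fun i => a < X i ∧ X (i+1) < a)).card := by
    have hseteq : {i : ℕ | i < q ∧ (X (i+1) - X i) * (X (i+2) - X (i+1)) < 0}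
        = ↑(((Finset.range q).filter (fun i => X i < a ∧ a < X (i+1))) ∪
            ((Finset.range q).filter (fun i => a < X i ∧ X (i+1) < a))) := by
      ext i
      simp only [Set.mem_setOf_eq, Finset.coe_union, Set.mem_union, Finset.mem_coe,
        Finset.mem_filter, Finset.mem_range, hswitch i]
      tauto
    rw [hseteq, Set.ncard_coe_finset, Finset.card_union_of_disjoint hdisj]
  have hterm : ∀ i, (if a < X (i+1) then (1:ℤ) else 0) - (if a < X i then (1:ℤ) else 0)
      = (if X i < a ∧ a < X (i+1) then (1:ℤ) else 0)
        - (if a < X i ∧ X (i+1) < a then (1:ℤ) else 0) := by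
    intro i
    by_cases h0 : a < X i
    · by_cases h1 : a < X (i+1)
      · simp [h0, h1, lt_asymm h0, lt_asymm h1]
      · simp [h0, h1, lt_asymm h0, htri _ h1]
    · by_cases h1 : a < X (i+1)
      · simp [h0, h1, htri _ h0, lt_asymm h1]
      · simp [h0, h1, htri _ h0, htri _ h1]
  have hUD : ((Finset.range q).filter (fun i => X i < a ∧ a < X (i+1))).card =
      ((Finset.range q).filter (fun i => a < X i ∧ X (i+1) < a)).card := by
    have htel := Finset.sum_range_sub (fun i => if a < X i then (1:ℤ) else 0) q
    simp only [hper, sub_self] at htel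
    have htel2 : (∑ i ∈ Finset.range q,
        ((if X i < a ∧ a < X (i+1) then (1:ℤ) else 0)
          - (if a < X i ∧ X (i+1) < a then (1:ℤ) else 0))) = 0 := by
      rw [Finset.sum_congr rfl fun i _ => (hterm i).symm]
      exact htel
    rw [Finset.sum_sub_distrib, Finset.sum_boole, Finset.sum_boole, sub_eq_zero] at htel2
    exact_mod_cast htel2
  refine ⟨hsetcard, hUD, ?_⟩
  by_contra hcon
  have hD0 : ((Finset.range q).filter (fun i => a < X i ∧ X (i+1) < a)) = ∅ :=
    Finset.card_eq_zero.1 (by omega)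
  have hU0 : ((Finset.range q).filter (fun i => X i < a ∧ a < X (i+1))) = ∅ :=
    Finset.card_eq_zero.1 (by rw [hUD]; omega)
  have hstep : ∀ i < q, (a < X i ↔ a < X (i+1)) := by
    intro i hi
    have hu : ¬ (X i < a ∧ a < X (i+1)) := by
      intro h
      have : i ∈ (Finset.range q).filter (fun i => X i < a ∧ a < X (i+1)) := by
        simp [Finset.mem_filter, Finset.mem_range, hi, h]
      rw [hU0] at this
      exact absurd this (Finset.notMem_empty i)
    have hd : ¬ (a < X i ∧ X (i+1) < a) := by
      intro h
      have : i ∈ (Finset.range q).filter (fun i => a < X i ∧ X (i+1) < a) := by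
        simp [Finset.mem_filter, Finset.mem_range, hi, h]
      rw [hD0] at this
      exact absurd this (Finset.notMem_empty i)
    constructor
    · intro h; by_contra h2; exact hd ⟨h, htri _ h2⟩
    · intro h; by_contra h2; exact hu ⟨htri _ h2, h⟩
  have hconst : ∀ i ≤ q, (a < X i ↔ a < X 0) := by
    intro i
    induction i with
    | zero => intro _; rfl
    | succ n ih =>
      intro hn
      rw [← hstep n (by omega)]
      exact ih (by omega)
  by_cases h0 : a < X 0
  · have hdec : ∀ i, i ≤ q → 1 ≤ i → X i < X 0 := by
      intro i
      induction i with
      | zero => intro _ h; exact absurd h (by norm_num)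
      | succ n ih =>
        intro hn _
        rcases Nat.eq_zero_or_pos n with hn0 | hn0
        · subst hn0; exact (key 0).1 h0
        · have hlt1 : X (n+1) < X n := (key n).1 ((hconst n (by omega)).2 h0)
          exact hlt1.trans (ih (by omega) hn0)
    have h := hdec q le_rfl hq1
    rw [hper] at h
    exact lt_irrefl _ h
  · have h0' : X 0 < a := htri 0 h0
    have hinc : ∀ i, i ≤ q → 1 ≤ i → X 0 < X i := by
      intro i
      induction i with
      | zero => intro _ h; exact absurd h (by norm_num)
      | succ n ih =>
        intro hn _
        rcases Nat.eq_zero_or_pos n with hn0 | hn0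
        · subst hn0; exact (key2 0).1 h0'
        · have hna : X n < a := htri n (fun hc => h0 ((hconst n (by omega)).1 hc))
          exact (ih (by omega) hn0).trans ((key2 n).1 hna)
    have h := hinc q le_rfl hq1
    rw [hper] at h
    exact lt_irrefl _ h


/-- For a continuous interval map `f` with unique fixed point `a` and a periodic point
`x` of minimal period `q ≥ 2`, the number of indices `0 ≤ i < q` at which consecutive
displacements have different signs is even and positive, and equals twice the number of
points `y` of the orbit of `x` with `y > a` and `f y < a`. -/
theorem switch_count_even_and_eq (f : ℝ → ℝ) (lo hi : ℝ) (hle : lo ≤ hi)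
    (hcont : ContinuousOn f (Set.Icc lo hi))
    (hmaps : Set.MapsTo f (Set.Icc lo hi) (Set.Icc lo hi))
    (a : ℝ) (ha : a ∈ Set.Icc lo hi) (hfa : f a = a)
    (hauniq : ∀ b ∈ Set.Icc lo hi, f b = b → b = a)
    (x : ℝ) (hx : x ∈ Set.Icc lo hi) (q : ℕ) (hq : 2 ≤ q)
    (hmin : Function.minimalPeriod f x = q) :
    Even (switchCount f x q) ∧ 0 < switchCount f x q ∧
      switchCount f x q = 2 * Set.ncard {y : ℝ | y ∈ orbitSet f x ∧ a < y ∧ f y < a} := by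
  classical
  have hq1 : 1 ≤ q := by omega
  have hmem : ∀ i, f^[i] x ∈ Set.Icc lo hi := by
    intro i
    induction i with
    | zero => exact hx
    | succ n ih => rw [Function.iterate_succ_apply']; exact hmaps ih
  have hitera : ∀ k, f^[k] a = a := by
    intro k
    induction k with
    | zero => rfl
    | succ n ih => rw [Function.iterate_succ_apply', ih, hfa]
  have hperx : f^[q] x = x := by
    have h := Function.isPeriodicPt_minimalPeriod f x
    rw [hmin] at h
    exact h
  have hne : ∀ i, f^[i] x ≠ a := by
    intro i hia
    have hmod := Function.iterate_mod_minimalPeriod_eq (f := f) (x := x) (n := i)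
    rw [hmin] at hmod
    have hj : f^[i % q] x = a := by rw [hmod, hia]
    have h2 : q = (q - i % q) + (i % q) := by
      have := Nat.mod_lt i (show 0 < q by omega)
      omega
    have hxa : x = a := by
      have h1 := hperx
      rw [h2, Function.iterate_add_apply, hj, hitera] at h1
      exact h1.symm
    have hfx : Function.IsFixedPt f x := by
      show f x = x
      rw [hxa, hfa]
    have h1 : Function.minimalPeriod f x = 1 :=
      Function.minimalPeriod_eq_one_iff_isFixedPt.2 hfx
    rw [h1] at hmin
    omega
  have hflo : lo ≤ f lo := (hmaps ⟨le_rfl, hle⟩).1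
  have hfhi : f hi ≤ hi := (hmaps ⟨hle, le_rfl⟩).2
  have hlt : ∀ z ∈ Set.Icc lo hi, z < a → z < f z := by
    intro z hz hza
    by_contra hcon
    push_neg at hcon
    have hfz : f z ≠ z := fun h => absurd (hauniq z hz h) (ne_of_lt hza)
    have hfz' : f z < z := lt_of_le_of_ne hcon hfz
    have hloa : lo < a := lt_of_le_of_lt hz.1 hza
    have hlo' : lo < f lo := by
      rcases eq_or_lt_of_le hflo with h | h
      · exact absurd (hauniq lo ⟨le_rfl, hle⟩ h.symm) (ne_of_lt hloa)
      · exact h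
    have hsub : Set.Icc lo z ⊆ Set.Icc lo hi := Set.Icc_subset_Icc le_rfl hz.2
    have hcg : ContinuousOn (fun t => f t - t) (Set.Icc lo z) :=
      (hcont.mono hsub).sub continuousOn_id
    have h0mem : (0:ℝ) ∈ Set.Icc ((fun t => f t - t) z) ((fun t => f t - t) lo) :=
      ⟨by simpa using hfz'.le, by simpa using hlo'.le⟩
    obtain ⟨c, hc, hc0⟩ := intermediate_value_Icc' hz.1 hcg h0mem
    have hfc : f c = c := by
      have : f c - c = 0 := hc0
      linarith
    have hca : c = a := hauniq c (hsub hc) hfc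
    have : c < a := lt_of_le_of_lt hc.2 hza
    rw [hca] at this
    exact lt_irrefl _ this
  have hgt : ∀ z ∈ Set.Icc lo hi, a < z → f z < z := by
    intro z hz hza
    by_contra hcon
    push_neg at hcon
    have hfz : f z ≠ z := fun h => absurd (hauniq z hz h) (ne_of_gt hza)
    have hfz' : z < f z := lt_of_le_of_ne hcon (Ne.symm hfz)
    have hahi : a < hi := lt_of_lt_of_le hza hz.2
    have hhi' : f hi < hi := by
      rcases eq_or_lt_of_le hfhi with h | h
      · exact absurd (hauniq hi ⟨hle, le_rfl⟩ h) (ne_of_gt hahi)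
      · exact h
    have hsub : Set.Icc z hi ⊆ Set.Icc lo hi := Set.Icc_subset_Icc hz.1 le_rfl
    have hcg : ContinuousOn (fun t => f t - t) (Set.Icc z hi) :=
      (hcont.mono hsub).sub continuousOn_id
    have h0mem : (0:ℝ) ∈ Set.Icc ((fun t => f t - t) hi) ((fun t => f t - t) z) :=
      ⟨by simpa using hhi'.le, by simpa using hfz'.le⟩
    obtain ⟨c, hc, hc0⟩ := intermediate_value_Icc' hz.2 hcg h0mem
    have hfc : f c = c := by
      have : f c - c = 0 := hc0
      linarith
    have hca : c = a := hauniq c (hsub hc) hfc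
    have : a < c := lt_of_lt_of_le hza hc.1
    rw [hca] at this
    exact lt_irrefl _ this
  have key : ∀ i, a < f^[i] x ↔ f^[i+1] x < f^[i] x := by
    intro i
    rw [Function.iterate_succ_apply']
    constructor
    · exact fun h => hgt _ (hmem i) h
    · intro h
      by_contra hc
      have h2 : f^[i] x < a := lt_of_le_of_ne (not_lt.1 hc) (hne i)
      exact absurd (hlt _ (hmem i) h2) (not_lt.2 h.le)
  have key2 : ∀ i, f^[i] x < a ↔ f^[i] x < f^[i+1] x := by
    intro i
    rw [Function.iterate_succ_apply']
    constructor
    · exact fun h => hlt _ (hmem i) h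
    · intro h
      by_contra hc
      have h2 : a < f^[i] x := lt_of_le_of_ne (not_lt.1 hc) (Ne.symm (hne i))
      exact absurd (hgt _ (hmem i) h2) (not_lt.2 h.le)
  obtain ⟨hA, hB, hC⟩ := crossing_aux a (fun i => f^[i] x) q hq1 (by simpa using hperx)
    hne key key2
  have hsc : switchCount f x q =
      ((Finset.range q).filter (fun i => f^[i] x < a ∧ a < f^[i+1] x)).card +
      ((Finset.range q).filter (fun i => a < f^[i] x ∧ f^[i+1] x < a)).card := by
    unfold switchCount
    exact hA
  have hinj : Set.InjOn (fun i => f^[i] x)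
      ↑((Finset.range q).filter (fun i => a < f^[i] x ∧ f^[i+1] x < a)) := by
    have h := Function.iterate_injOn_Iio_minimalPeriod (f := f) (x := x)
    rw [hmin] at h
    refine h.mono ?_
    intro i hi
    simp only [Finset.coe_filter, Set.mem_setOf_eq, Finset.mem_range] at hi
    exact Set.mem_Iio.2 hi.1
  have horb : {y : ℝ | y ∈ orbitSet f x ∧ a < y ∧ f y < a}
      = (fun i => f^[i] x) ''
        ↑((Finset.range q).filter (fun i => a < f^[i] x ∧ f^[i+1] x < a)) := by
    ext y
    simp only [Set.mem_setOf_eq, Set.mem_image, Finset.coe_filter, Finset.mem_range,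
      orbitSet, Set.mem_range]
    constructor
    · rintro ⟨⟨k, rfl⟩, hy1, hy2⟩
      have hkq : f^[k % q] x = f^[k] x := by
        have h := Function.iterate_mod_minimalPeriod_eq (f := f) (x := x) (n := k)
        rw [hmin] at h
        exact h
      refine ⟨k % q, ⟨Nat.mod_lt _ (by omega), ?_, ?_⟩, hkq⟩
      · rw [hkq]; exact hy1
      · rw [Function.iterate_succ_apply', hkq]
        exact hy2
    · rintro ⟨i, ⟨hi, h1, h2⟩, rfl⟩
      refine ⟨⟨i, rfl⟩, h1, ?_⟩
      rw [Function.iterate_succ_apply'] at h2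
      exact h2
  have hcard : {y : ℝ | y ∈ orbitSet f x ∧ a < y ∧ f y < a}.ncard =
      ((Finset.range q).filter (fun i => a < f^[i] x ∧ f^[i+1] x < a)).card := by
    rw [horb, Set.ncard_image_of_injOn hinj, Set.ncard_coe_finset]
  refine ⟨?_, ?_, ?_⟩
  · rw [hsc, hB]
    exact ⟨_, rfl⟩
  · rw [hsc]
    omega
  · rw [hsc, hB, hcard]
    omega


end OverRotation
end
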